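/- arXiv:1606.06886 — 4 statements merged into one kernel-verified Lean document; each statement's English description precedes it below -/
import Mathlib

section
/- Let p ≥ 3 be a real number and let u : ℝ³ × [0,∞) → ℝ be a C³ solution of ∂ₜ²u − Δu + |∂ₜu|^{p−1}∂ₜu = 0 that is spatially compactly supported on compact time intervals. Let v = D^α u be any first-order space-time partial derivative of u (v = ∂_{x_i}u for some i, or v = ∂ₜu). Then for every t ≥ 0, (1/2)∫_{ℝ³}(|∇v(x,t)|² + (∂ₜv(x,t))²)dx + p∫₀ᵗ ∫_{ℝ³} |∂ₛu(x,s)|^{p−1}(∂ₛv(x,s))² dx ds = (1/2)∫_{ℝ³}(|∇v(x,0)|² + (∂ₜv(x,0))²)dx. -/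
open MeasureTheory Set Real
open scoped ENNReal

noncomputable section

/-- Euclidean space ℝ³. -/
abbrev E3 : Type := EuclideanSpace ℝ (Fin 3)

/-- Time derivative ∂ₜ of a function of (x, t) ∈ ℝ³ × ℝ. -/
def pt (u : E3 × ℝ → ℝ) : E3 × ℝ → ℝ := fun z => fderiv ℝ u z ((0 : E3), (1 : ℝ))

/-- Spatial partial derivative ∂_{x i}. -/
def px (i : Fin 3) (u : E3 × ℝ → ℝ) : E3 × ℝ → ℝ :=
  fun z => fderiv ℝ u z (EuclideanSpace.single i 1, (0 : ℝ))

/-- Spatial Laplacian Δ (in the x variables). -/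
def lap (u : E3 × ℝ → ℝ) : E3 × ℝ → ℝ := fun z => ∑ i : Fin 3, px i (px i u) z

/-- `u` is spatially compactly supported on compact time intervals. -/
def SpatialCptSupp (u : E3 × ℝ → ℝ) : Prop :=
  ∀ T : ℝ, 0 < T → ∃ R > (0 : ℝ), ∀ (x : E3) (t : ℝ),
    R ≤ ‖x‖ → 0 ≤ t → t ≤ T → u (x, t) = 0

/-- `u` is radially symmetric in `x` (for nonnegative times). -/
def RadialIn (u : E3 × ℝ → ℝ) : Prop :=
  ∀ (x y : E3) (t : ℝ), 0 ≤ t → ‖x‖ = ‖y‖ → u (x, t) = u (y, t)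

/-- The four coordinate directions of space-time ℝ³ × ℝ: directions 0,1,2 are spatial,
direction 3 is time. -/
def dir4 : Fin 4 → E3 × ℝ := fun i =>
  if h : (i : ℕ) < 3 then (EuclideanSpace.single ⟨(i : ℕ), h⟩ 1, (0 : ℝ))
  else ((0 : E3), (1 : ℝ))

/-- Directional derivative along `v`. -/
def pdir (v : E3 × ℝ) (u : E3 × ℝ → ℝ) : E3 × ℝ → ℝ := fun z => fderiv ℝ u z v

/-- Mixed space-time partial derivative `D^α` of total order `n`, encoded by a tuple
`m : Fin n → Fin 4` of coordinate directions. -/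
def Dmix : {n : ℕ} → (Fin n → Fin 4) → (E3 × ℝ → ℝ) → (E3 × ℝ → ℝ)
  | 0, _, u => u
  | _ + 1, m, u => pdir (dir4 (m 0)) (Dmix (fun i => m i.succ) u)

/-- Squared length of the full space-time gradient `Dv = (∇v, ∂ₜv)` at a point. -/
def DgradSq (v : E3 × ℝ → ℝ) (z : E3 × ℝ) : ℝ := ∑ j : Fin 4, (pdir (dir4 j) v z) ^ 2

/-- Energy density `|∇v|² + (∂ₜv)²` of the space-time gradient `Dv = (∇v, ∂ₜv)`. -/
def eDen (v : E3 × ℝ → ℝ) (z : E3 × ℝ) : ℝ := (∑ i : Fin 3, (px i v z) ^ 2) + (pt v z) ^ 2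

/-!
Since `u` is `C³`, `v = D^α u` is `C²`, and differentiating the equation shows that `v` solves
the linearised equation `∂ₜ²v − Δv + p |∂ₜu|^(p−1) ∂ₜv = 0` for `t > 0` (the nonlinearity
`w ↦ |w|^(p−1) w` is `C¹` with derivative `p |w|^(p−1)`). Differentiating the energy
`E(t) = ∫ |∇v|² + (∂ₜv)²` under the integral sign and integrating by parts in `x`, with no
boundary terms because every derivative of `u` vanishes for large `|x|`, gives
`E'(t) = 2 ∫ ∂ₜv (∂ₜ²v − Δv) = −2p ∫ |∂ₜu|^(p−1) (∂ₜv)²`. The identity is the fundamental theorem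
of calculus for `E`; all integrands being nonnegative, it carries over to lower Lebesgue integrals.
-/

open Topology

section Derivatives

variable {f : E3 × ℝ → ℝ} {m n : WithTop ℕ∞}

lemma ContDiff.pdir (hf : ContDiff ℝ n f) (hmn : m + 1 ≤ n) (d : E3 × ℝ) :
    ContDiff ℝ m (pdir d f) :=
  (hf.fderiv_right hmn).clm_apply contDiff_const

lemma ContDiff.continuous_pt (hf : ContDiff ℝ 1 f) : Continuous (pt f) :=
  (hf.pdir (m := 0) le_rfl _).continuous

lemma ContDiff.continuous_px (hf : ContDiff ℝ 1 f) (i : Fin 3) : Continuous (px i f) :=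
  (hf.pdir (m := 0) le_rfl _).continuous

lemma ContDiff.pt (hf : ContDiff ℝ n f) (hmn : m + 1 ≤ n) : ContDiff ℝ m (pt f) :=
  hf.pdir hmn _

lemma ContDiff.px (hf : ContDiff ℝ n f) (hmn : m + 1 ≤ n) (i : Fin 3) : ContDiff ℝ m (px i f) :=
  hf.pdir hmn _

lemma ContDiff.lap (hf : ContDiff ℝ n f) (hmn : m + 2 ≤ n) : ContDiff ℝ m (lap f) :=
  ContDiff.sum fun i _ => ((hf.px (m := m + 1) (by rwa [add_assoc, one_add_one_eq_two]) i).px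
    le_rfl i)

lemma pdir_comm (hf : ContDiff ℝ 2 f) (a b : E3 × ℝ) :
    pdir a (pdir b f) = pdir b (pdir a f) := by
  ext z
  have hf' : DifferentiableAt ℝ (fderiv ℝ f) z :=
    ((hf.fderiv_right (m := 1) le_rfl).differentiable one_ne_zero) z
  have second : ∀ a b, pdir a (pdir b f) z = fderiv ℝ (fderiv ℝ f) z a b := fun a b => by
    change fderiv ℝ (fun y => fderiv ℝ f y b) z a = _
    simp [(hf'.hasFDerivAt.clm_apply (hasFDerivAt_const b z)).fderiv]
  rw [second, second, (hf.contDiffAt.isSymmSndFDerivAt (by simp)).eq]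

lemma pdir_pt (hf : ContDiff ℝ 2 f) (d : E3 × ℝ) : pdir d (pt f) = pt (pdir d f) :=
  pdir_comm hf d _

lemma pdir_px (hf : ContDiff ℝ 2 f) (d : E3 × ℝ) (i : Fin 3) :
    pdir d (px i f) = px i (pdir d f) :=
  pdir_comm hf d _

lemma pt_px (hf : ContDiff ℝ 2 f) (i : Fin 3) : pt (px i f) = px i (pt f) :=
  pdir_comm hf _ _

lemma pdir_lap (hf : ContDiff ℝ 3 f) (d : E3 × ℝ) : pdir d (lap f) = lap (pdir d f) := by
  have hpx2 : ∀ i, ContDiff ℝ 2 (px i f) := hf.px (by norm_num)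
  ext z
  have hsum : HasFDerivAt (lap f) (∑ i, fderiv ℝ (px i (px i f)) z) z :=
    HasFDerivAt.fun_sum fun i _ =>
      (((hpx2 i).px (m := 1) (by norm_num) i).differentiable one_ne_zero z).hasFDerivAt
  change fderiv ℝ (lap f) z d = _
  simp only [hsum.fderiv, _root_.sum_apply, lap]
  refine Finset.sum_congr rfl fun i _ => ?_
  change pdir d (px i (px i f)) z = _
  rw [pdir_px (hpx2 i), pdir_px (hf.of_le (by norm_num))]

lemma hasDerivAt_slice_pt {x : E3} {t : ℝ} (hf : DifferentiableAt ℝ f (x, t)) :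
    HasDerivAt (fun s => f (x, s)) (pt f (x, t)) t :=
  hf.hasFDerivAt.comp_hasDerivAt t ((hasDerivAt_const t x).prodMk (hasDerivAt_id t))

lemma fderiv_slice_apply {x : E3} {t : ℝ} (hf : DifferentiableAt ℝ f (x, t)) (e : E3) :
    fderiv ℝ (fun y => f (y, t)) x e = fderiv ℝ f (x, t) (e, 0) := by
  have h : HasFDerivAt (fun y => f (y, t)) _ x :=
    hf.hasFDerivAt.comp x (hasFDerivAt_prodMk_left x t)
  simp [h.fderiv]

end Derivatives

lemma hasDerivAt_abs_rpow_sub_one_mul {p : ℝ} (hp : 2 < p) (w : ℝ) :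
    HasDerivAt (fun y : ℝ => |y| ^ (p - 1) * y) (p * |w| ^ (p - 1)) w := by
  have h := (hasDerivAt_abs_rpow w (p := p - 1) (by linarith)).mul (hasDerivAt_id w)
  refine h.congr_deriv ?_
  have hsq : |w| ^ (p - 1) = |w| ^ (p - 1 - 2) * (w * w) := by
    rw [← abs_mul_abs_self, ← sq, ← Real.rpow_natCast,
      ← Real.rpow_add' (abs_nonneg w) (by norm_num; linarith)]
    norm_num
  rw [hsq, id]
  ring

def exteriorCylinder (R T : ℝ) : Set (E3 × ℝ) := {x | R < ‖x‖} ×ˢ Icc 0 T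

lemma SpatialCptSupp.exists_eqOn_exteriorCylinder {u : E3 × ℝ → ℝ} (hu : SpatialCptSupp u)
    {T : ℝ} (hT : 0 < T) : ∃ R, EqOn u 0 (exteriorCylinder R T) := by
  obtain ⟨R, -, hR⟩ := hu T hT
  exact ⟨R, fun z ⟨hx, ht⟩ => hR z.1 z.2 hx.le ht.1 ht.2⟩

lemma Set.EqOn.pdir_of_isOpen {f : E3 × ℝ → ℝ} {U : Set (E3 × ℝ)} (hU : IsOpen U)
    (hf : EqOn f 0 U) (d : E3 × ℝ) : EqOn (pdir d f) 0 U := fun z hz => by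
  have hz : f =ᶠ[𝓝 z] fun _ => 0 := hf.eventuallyEq_of_mem (hU.mem_nhds hz)
  simp [pdir, hz.fderiv_eq]

/-- On the faces `t = 0` and `t = T` only one-sided information on `f` is available: there the
derivative vanishes by continuity. -/
lemma Set.EqOn.pdir_exteriorCylinder {f : E3 × ℝ → ℝ} {R T : ℝ} (hT : 0 < T)
    (hf : EqOn f 0 (exteriorCylinder R T)) {d : E3 × ℝ} (hd : Continuous (pdir d f)) :
    EqOn (pdir d f) 0 (exteriorCylinder R T) := by
  have hU : IsOpen ({x : E3 | R < ‖x‖} ×ˢ Ioo 0 T) :=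
    (isOpen_lt continuous_const continuous_norm).prod isOpen_Ioo
  have hsub : {x : E3 | R < ‖x‖} ×ˢ Ioo 0 T ⊆ exteriorCylinder R T :=
    prod_mono le_rfl Ioo_subset_Icc_self
  refine EqOn.of_subset_closure ((hf.mono hsub).pdir_of_isOpen hU d) hd.continuousOn
    continuousOn_const hsub ?_
  rw [closure_prod_eq, closure_Ioo hT.ne]
  exact prod_mono subset_closure le_rfl

lemma eqOn_pdir_pdir_exteriorCylinder {u : E3 × ℝ → ℝ} (hu : ContDiff ℝ 2 u) {R T : ℝ}
    (hT : 0 < T) (hsupp : EqOn u 0 (exteriorCylinder R T)) (a b : E3 × ℝ) :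
    EqOn (pdir a (pdir b u)) 0 (exteriorCylinder R T) := by
  have hb : ContDiff ℝ 1 (pdir b u) := hu.pdir (by norm_num) b
  exact (hsupp.pdir_exteriorCylinder hT hb.continuous).pdir_exteriorCylinder hT
    (hb.pdir (m := 0) le_rfl a).continuous

section SliceIntegral

variable {f : E3 × ℝ → ℝ} {R T : ℝ}

lemma continuous_slice (hf : Continuous f) (s : ℝ) : Continuous fun x : E3 => f (x, s) :=
  hf.comp (continuous_id.prodMk continuous_const)

lemma integrable_slice (hf : Continuous f) (h0 : EqOn f 0 (exteriorCylinder R T)) {s : ℝ}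
    (hs : s ∈ Icc 0 T) : Integrable fun x : E3 => f (x, s) := by
  refine (continuous_slice hf s).integrable_of_hasCompactSupport
    (HasCompactSupport.intro (isCompact_closedBall (0 : E3) R) fun x hx => h0 ⟨?_, hs⟩)
  simpa using hx

lemma integrable_slice_mul {g : E3 × ℝ → ℝ} (hf : Continuous f) (hg : Continuous g)
    (h0 : EqOn f 0 (exteriorCylinder R T)) {s : ℝ} (hs : s ∈ Icc 0 T) :
    Integrable fun x : E3 => f (x, s) * g (x, s) :=
  integrable_slice (f := f * g) (R := R) (hf.mul hg) (fun _ hz => by simp [h0 hz]) hs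

lemma exists_integrable_bound_slice (hf : Continuous f) (h0 : EqOn f 0 (exteriorCylinder R T)) :
    ∃ bound : E3 → ℝ, Integrable bound ∧ ∀ x, ∀ s ∈ Icc 0 T, ‖f (x, s)‖ ≤ bound x := by
  obtain ⟨C, hC⟩ := ((isCompact_closedBall (0 : E3) R).prod
    (isCompact_Icc (a := 0) (b := T))).exists_bound_of_continuousOn hf.continuousOn
  refine ⟨(Metric.closedBall (0 : E3) R).indicator fun _ => C,
    (integrableOn_const measure_closedBall_lt_top.ne).integrable_indicator measurableSet_closedBall,
    fun x s hs => ?_⟩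
  by_cases hx : x ∈ Metric.closedBall (0 : E3) R
  · rw [indicator_of_mem hx]
    exact hC (x, s) ⟨hx, hs⟩
  · rw [indicator_of_notMem hx, h0 ⟨by simpa using hx, hs⟩]
    simp

lemma continuousOn_integral_slice (hf : Continuous f) (h0 : EqOn f 0 (exteriorCylinder R T)) :
    ContinuousOn (fun s => ∫ x : E3, f (x, s)) (Icc 0 T) := by
  obtain ⟨bound, hbound, hle⟩ := exists_integrable_bound_slice hf h0
  exact continuousOn_of_dominated (fun s _ => (continuous_slice hf s).aestronglyMeasurable)
    (fun s hs => .of_forall fun x => hle x s hs) hbound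
    (.of_forall fun x => (hf.comp (continuous_const.prodMk continuous_id)).continuousOn)

lemma hasDerivAt_integral_slice {f' : E3 × ℝ → ℝ} (hf : Continuous f) (hf' : Continuous f')
    (h0 : EqOn f 0 (exteriorCylinder R T)) (h0' : EqOn f' 0 (exteriorCylinder R T))
    (hderiv : ∀ x s, HasDerivAt (fun σ => f (x, σ)) (f' (x, s)) s) {s : ℝ} (hs : s ∈ Ioo 0 T) :
    HasDerivAt (fun s => ∫ x : E3, f (x, s)) (∫ x : E3, f' (x, s)) s := by
  obtain ⟨bound, hbound, hle⟩ := exists_integrable_bound_slice hf' h0'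
  exact (hasDerivAt_integral_of_dominated_loc_of_deriv_le (isOpen_Ioo.mem_nhds hs)
    (.of_forall fun σ => (continuous_slice hf σ).aestronglyMeasurable)
    (integrable_slice hf h0 (Ioo_subset_Icc_self hs))
    (continuous_slice hf' s).aestronglyMeasurable
    (.of_forall fun x σ hσ => hle x σ (Ioo_subset_Icc_self hσ)) hbound
    (.of_forall fun x σ _ => hderiv x σ)).2

lemma lintegral_ofReal_slice (hf : Continuous f) (hnn : 0 ≤ f)
    (h0 : EqOn f 0 (exteriorCylinder R T)) {s : ℝ} (hs : s ∈ Icc 0 T) :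
    ∫⁻ x : E3, ENNReal.ofReal (f (x, s)) = ENNReal.ofReal (∫ x : E3, f (x, s)) :=
  (ofReal_integral_eq_lintegral_ofReal (integrable_slice hf h0 hs)
    (.of_forall fun _ => hnn _)).symm

lemma setLIntegral_lintegral_ofReal_slice (hf : Continuous f) (hnn : 0 ≤ f)
    (h0 : EqOn f 0 (exteriorCylinder R T)) {t : ℝ} (ht : t ∈ Icc 0 T) :
    ∫⁻ s in Icc 0 t, ∫⁻ x : E3, ENNReal.ofReal (f (x, s))
      = ENNReal.ofReal (∫ s in 0..t, ∫ x : E3, f (x, s)) := by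
  rw [setLIntegral_congr_fun measurableSet_Icc
      fun s hs => lintegral_ofReal_slice hf hnn h0 ⟨hs.1, hs.2.trans ht.2⟩,
    ← ofReal_integral_eq_lintegral_ofReal
      (((continuousOn_integral_slice hf h0).mono (Icc_subset_Icc_right ht.2)).integrableOn_Icc)
      (.of_forall fun s => integral_nonneg fun x => hnn _),
    integral_Icc_eq_integral_Ioc, intervalIntegral.integral_of_le ht.1]

lemma integral_mul_px_slice {g : E3 × ℝ → ℝ} (hf : ContDiff ℝ 1 f) (hg : ContDiff ℝ 1 g)
    (hf0 : EqOn f 0 (exteriorCylinder R T)) (hg0 : EqOn g 0 (exteriorCylinder R T))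
    (i : Fin 3) {s : ℝ} (hs : s ∈ Icc 0 T) :
    ∫ x : E3, f (x, s) * px i g (x, s) = -∫ x : E3, px i f (x, s) * g (x, s) := by
  have hfd : Differentiable ℝ f := hf.differentiable one_ne_zero
  have hgd : Differentiable ℝ g := hg.differentiable one_ne_zero
  have hslice : ∀ {h : E3 × ℝ → ℝ}, Differentiable ℝ h →
      ∀ x, px i h (x, s) = fderiv ℝ (fun y => h (y, s)) x (EuclideanSpace.single i 1) :=
    fun hd x => (fderiv_slice_apply (hd _) _).symm
  simp only [hslice hfd, hslice hgd]
  refine integral_mul_fderiv_eq_neg_fderiv_mul_of_integrable ?_ ?_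
    (integrable_slice_mul hf.continuous hg.continuous hf0 hs)
    (fun x _ => (hfd.comp (by fun_prop)) x) (fun x _ => (hgd.comp (by fun_prop)) x)
  · simpa only [hslice hfd, mul_comm] using
      integrable_slice_mul hg.continuous (hf.continuous_px i) hg0 hs
  · simpa only [hslice hgd] using integrable_slice_mul hf.continuous (hg.continuous_px i) hf0 hs

end SliceIntegral

section Densities

variable {v : E3 × ℝ → ℝ} {C : Set (E3 × ℝ)}

/-- `∂ₜ (eDen v)`, with `∂ₜ∂ᵢv` already written as `∂ᵢ∂ₜv`, ready for integration by parts. -/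
def eDenDeriv (v : E3 × ℝ → ℝ) (z : E3 × ℝ) : ℝ :=
  2 * ((∑ i, px i v z * px i (pt v) z) + pt v z * pt (pt v) z)

def dissipationDen (p : ℝ) (u v : E3 × ℝ → ℝ) (z : E3 × ℝ) : ℝ := |pt u z| ^ (p - 1) * pt v z ^ 2

lemma eDen_nonneg (v : E3 × ℝ → ℝ) : 0 ≤ eDen v :=
  fun _ => add_nonneg (Finset.sum_nonneg fun _ _ => sq_nonneg _) (sq_nonneg _)

lemma dissipationDen_nonneg (p : ℝ) (u v : E3 × ℝ → ℝ) : 0 ≤ dissipationDen p u v :=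
  fun _ => mul_nonneg (Real.rpow_nonneg (abs_nonneg _) _) (sq_nonneg _)

lemma continuous_eDen (hv : ContDiff ℝ 1 v) : Continuous (eDen v) :=
  (continuous_finsetSum _ fun i _ => (hv.continuous_px i).pow 2).add (hv.continuous_pt.pow 2)

lemma continuous_eDenDeriv (hv : ContDiff ℝ 2 v) : Continuous (eDenDeriv v) := by
  have hpt : ContDiff ℝ 1 (pt v) := hv.pt (by norm_num)
  have hv1 : ContDiff ℝ 1 v := hv.of_le (by norm_num)
  exact continuous_const.mul ((continuous_finsetSum _ fun i _ =>
    (hv1.continuous_px i).mul (hpt.continuous_px i)).add (hv1.continuous_pt.mul hpt.continuous_pt))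

lemma continuous_dissipationDen {p : ℝ} (hp : 1 ≤ p) {u : E3 × ℝ → ℝ} (hu : Continuous (pt u))
    (hv : Continuous (pt v)) : Continuous (dissipationDen p u v) :=
  ((continuous_abs.comp hu).rpow_const fun _ => .inr (by linarith)).mul (hv.pow 2)

lemma Set.EqOn.eDen (hpt : EqOn (pt v) 0 C) (hpx : ∀ i, EqOn (px i v) 0 C) :
    EqOn (eDen v) 0 C := fun z hz => by
  simp [_root_.eDen, hpt hz, fun i => hpx i hz]

lemma Set.EqOn.eDenDeriv (hpt : EqOn (pt v) 0 C) (hpx : ∀ i, EqOn (px i v) 0 C) :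
    EqOn (eDenDeriv v) 0 C := fun z hz => by
  simp [_root_.eDenDeriv, hpt hz, fun i => hpx i hz]

lemma Set.EqOn.dissipationDen (hv : EqOn (pt v) 0 C) (p : ℝ) (u : E3 × ℝ → ℝ) :
    EqOn (dissipationDen p u v) 0 C := fun z hz => by
  simp [_root_.dissipationDen, hv hz]

lemma hasDerivAt_eDen_slice (hv : ContDiff ℝ 2 v) (x : E3) (s : ℝ) :
    HasDerivAt (fun σ => eDen v (x, σ)) (eDenDeriv v (x, s)) s := by
  have hd : ∀ {f : E3 × ℝ → ℝ}, ContDiff ℝ 1 f → HasDerivAt (fun σ => f (x, σ)) (pt f (x, s)) s :=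
    fun hf => hasDerivAt_slice_pt (hf.differentiable one_ne_zero _)
  have hpx : ∀ i, HasDerivAt (fun σ => px i v (x, σ)) (px i (pt v) (x, s)) s := fun i => by
    rw [← pt_px hv]
    exact hd (hv.px le_rfl i)
  refine ((HasDerivAt.fun_sum (u := Finset.univ) fun i _ => (hpx i).fun_pow 2).add
    ((hd (hv.pt le_rfl)).fun_pow 2)).congr_deriv ?_
  norm_num [eDenDeriv, mul_add, Finset.mul_sum, mul_assoc]

end Densities

section EnergyIdentity

variable {p : ℝ} {u : E3 × ℝ → ℝ} {R T : ℝ}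

lemma pdir_solves_linearized_eq (hp : 2 < p) (hu : ContDiff ℝ 3 u)
    (heq : ∀ (x : E3) (t : ℝ), 0 ≤ t →
      pt (pt u) (x, t) - lap u (x, t) + |pt u (x, t)| ^ (p - 1) * pt u (x, t) = 0)
    (d : E3 × ℝ) {z : E3 × ℝ} (hz : 0 < z.2) :
    pt (pt (pdir d u)) z - lap (pdir d u) z + p * |pt u z| ^ (p - 1) * pt (pdir d u) z = 0 := by
  have hpt2 : ContDiff ℝ 2 (pt u) := hu.pt (by norm_num)
  have hF : HasFDerivAt (fun w => pt (pt u) w - lap u w + |pt u w| ^ (p - 1) * pt u w)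
      (fderiv ℝ (pt (pt u)) z - fderiv ℝ (lap u) z
        + (p * |pt u z| ^ (p - 1)) • fderiv ℝ (pt u) z) z :=
    ((((hpt2.pt (m := 1) (by norm_num)).differentiable one_ne_zero z).hasFDerivAt.sub
      (((hu.lap (m := 1) (by norm_num)).differentiable one_ne_zero z).hasFDerivAt)).add
      ((hasDerivAt_abs_rpow_sub_one_mul hp _).comp_hasFDerivAt z
        ((hpt2.differentiable two_ne_zero z).hasFDerivAt)))
  have hzero := Set.EqOn.pdir_of_isOpen (isOpen_lt continuous_const continuous_snd)
    (fun w (hw : 0 < w.2) => heq w.1 w.2 hw.le) d hz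
  change fderiv ℝ _ z d = 0 at hzero
  rw [hF.fderiv] at hzero
  change pdir d (pt (pt u)) z - pdir d (lap u) z + p * |pt u z| ^ (p - 1) * pdir d (pt u) z = 0
    at hzero
  rwa [pdir_pt hpt2, pdir_pt (hu.of_le (by norm_num)), pdir_lap hu] at hzero

variable (hp : 2 < p) (hu : ContDiff ℝ 3 u)
  (heq : ∀ (x : E3) (t : ℝ), 0 ≤ t →
    pt (pt u) (x, t) - lap u (x, t) + |pt u (x, t)| ^ (p - 1) * pt u (x, t) = 0)
  (hT : 0 < T) (hsupp : EqOn u 0 (exteriorCylinder R T))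
include hp hu heq hT hsupp

lemma integral_eDenDeriv_eq (d : E3 × ℝ) {s : ℝ} (hs : s ∈ Ioc 0 T) :
    ∫ x : E3, eDenDeriv (pdir d u) (x, s)
      = -(2 * p) * ∫ x : E3, dissipationDen p u (pdir d u) (x, s) := by
  set v := pdir d u
  have hv : ContDiff ℝ 2 v := hu.pdir (by norm_num) d
  have hpt : ContDiff ℝ 1 (pt v) := hv.pt (by norm_num)
  have hpx : ∀ i, ContDiff ℝ 1 (px i v) := hv.px (by norm_num)
  have hpt0 : EqOn (pt v) 0 (exteriorCylinder R T) :=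
    eqOn_pdir_pdir_exteriorCylinder (hu.of_le (by norm_num)) hT hsupp _ d
  have hpx0 : ∀ i, EqOn (px i v) 0 (exteriorCylinder R T) := fun i =>
    eqOn_pdir_pdir_exteriorCylinder (hu.of_le (by norm_num)) hT hsupp _ d
  have hs' : s ∈ Icc 0 T := Ioc_subset_Icc_self hs
  have hibp : ∀ i, ∫ x : E3, px i v (x, s) * px i (pt v) (x, s)
      = -∫ x : E3, px i (px i v) (x, s) * pt v (x, s) := fun i =>
    integral_mul_px_slice (hpx i) hpt (hpx0 i) hpt0 i hs'
  have hpde : ∀ x : E3, pt v (x, s) * pt (pt v) (x, s)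
      = lap v (x, s) * pt v (x, s) + -p * dissipationDen p u v (x, s) := fun x => by
    have := pdir_solves_linearized_eq hp hu heq d (z := (x, s)) hs.1
    simp only [dissipationDen]
    linear_combination pt v (x, s) * this
  have hint_lap : Integrable fun x : E3 => lap v (x, s) * pt v (x, s) := by
    simpa only [mul_comm] using integrable_slice_mul hpt.continuous
      (hv.lap (m := 0) (by norm_num)).continuous hpt0 hs'
  have hint_diss : Integrable fun x : E3 => dissipationDen p u v (x, s) :=
    integrable_slice (continuous_dissipationDen (by linarith)
      (hu.of_le (by norm_num)).continuous_pt hpt.continuous) (hpt0.dissipationDen p u) hs'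
  simp only [eDenDeriv]
  rw [integral_const_mul, integral_add (integrable_finsetSum _ fun i _ =>
      integrable_slice_mul (hpx i).continuous (hpt.continuous_px i) (hpx0 i) hs')
      (integrable_slice_mul hpt.continuous hpt.continuous_pt hpt0 hs'),
    integral_finsetSum _ fun i _ =>
      integrable_slice_mul (hpx i).continuous (hpt.continuous_px i) (hpx0 i) hs']
  simp_rw [hibp, hpde]
  rw [integral_add hint_lap (hint_diss.const_mul _), integral_const_mul, Finset.sum_neg_distrib,
    ← integral_finsetSum _ fun i _ => ?_]
  · simp only [lap, Finset.sum_mul]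
    ring
  · simpa only [mul_comm] using
      integrable_slice_mul hpt.continuous ((hpx i).continuous_px i) hpt0 hs'

lemma energy_identity (d : E3 × ℝ) {t : ℝ} (ht : t ∈ Icc 0 T) :
    (1 / 2) * (∫ x : E3, eDen (pdir d u) (x, t))
        + p * ∫ s in 0..t, ∫ x : E3, dissipationDen p u (pdir d u) (x, s)
      = (1 / 2) * ∫ x : E3, eDen (pdir d u) (x, 0) := by
  set v := pdir d u
  have hv : ContDiff ℝ 2 v := hu.pdir (by norm_num) d
  have hv1 : ContDiff ℝ 1 v := hv.of_le (by norm_num)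
  have hpt0 : EqOn (pt v) 0 (exteriorCylinder R T) :=
    eqOn_pdir_pdir_exteriorCylinder (hu.of_le (by norm_num)) hT hsupp _ d
  have hpx0 : ∀ i, EqOn (px i v) 0 (exteriorCylinder R T) := fun i =>
    eqOn_pdir_pdir_exteriorCylinder (hu.of_le (by norm_num)) hT hsupp _ d
  have hG : IntervalIntegrable (fun s => ∫ x : E3, dissipationDen p u v (x, s)) volume 0 t :=
    ((continuousOn_integral_slice (continuous_dissipationDen (by linarith)
      (hu.of_le (by norm_num)).continuous_pt hv1.continuous_pt)
      (hpt0.dissipationDen p u)).mono (Icc_subset_Icc_right ht.2)).intervalIntegrable_of_Icc ht.1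
  have hFTC := intervalIntegral.integral_eq_sub_of_hasDerivAt_of_le ht.1
    ((continuousOn_integral_slice (continuous_eDen hv1)
      (hpt0.eDen hpx0)).mono (Icc_subset_Icc_right ht.2))
    (fun s hs => by
      have := hasDerivAt_integral_slice (continuous_eDen hv1)
        (continuous_eDenDeriv hv) (hpt0.eDen hpx0) (hpt0.eDenDeriv hpx0)
        (hasDerivAt_eDen_slice hv) ⟨hs.1, hs.2.trans_le ht.2⟩
      rwa [integral_eDenDeriv_eq hp hu heq hT hsupp d ⟨hs.1, (hs.2.trans_le ht.2).le⟩] at this)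
    (hG.const_mul (-(2 * p)))
  rw [intervalIntegral.integral_const_mul] at hFTC
  linear_combination -(1 / 2) * hFTC

lemma energy_identity_lintegral (d : E3 × ℝ) {t : ℝ} (ht : t ∈ Icc 0 T) :
    (1 / 2 : ℝ≥0∞) * (∫⁻ x : E3, ENNReal.ofReal (eDen (pdir d u) (x, t)))
        + ENNReal.ofReal p *
          ∫⁻ s in Icc 0 t, ∫⁻ x : E3, ENNReal.ofReal (dissipationDen p u (pdir d u) (x, s))
      = (1 / 2 : ℝ≥0∞) * ∫⁻ x : E3, ENNReal.ofReal (eDen (pdir d u) (x, 0)) := by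
  set v := pdir d u
  have hv : ContDiff ℝ 1 v := hu.pdir (by norm_num) _
  have hpt0 : EqOn (pt v) 0 (exteriorCylinder R T) :=
    eqOn_pdir_pdir_exteriorCylinder (hu.of_le (by norm_num)) hT hsupp _ _
  have hpx0 : ∀ i, EqOn (px i v) 0 (exteriorCylinder R T) := fun i =>
    eqOn_pdir_pdir_exteriorCylinder (hu.of_le (by norm_num)) hT hsupp _ _
  have hE := fun s (hs : s ∈ Icc 0 T) =>
    lintegral_ofReal_slice (continuous_eDen hv) (eDen_nonneg v) (hpt0.eDen hpx0) hs
  rw [hE t ht, hE 0 ⟨le_rfl, hT.le⟩, setLIntegral_lintegral_ofReal_slice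
    (continuous_dissipationDen (by linarith) (hu.of_le (by norm_num)).continuous_pt
      hv.continuous_pt) (dissipationDen_nonneg p u v) (hpt0.dissipationDen p u) ht]
  have h12 : (1 / 2 : ℝ≥0∞) = ENNReal.ofReal (1 / 2) := by
    rw [ENNReal.ofReal_div_of_pos two_pos, ENNReal.ofReal_one, ENNReal.ofReal_ofNat]
  rw [h12, ← ENNReal.ofReal_mul (p := 1 / 2) (by norm_num),
    ← ENNReal.ofReal_mul (p := 1 / 2) (by norm_num), ← ENNReal.ofReal_mul (p := p) (by linarith),
    ← ENNReal.ofReal_add (mul_nonneg (by norm_num) (integral_nonneg fun x => eDen_nonneg v (x, t)))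
      (mul_nonneg (by linarith) (intervalIntegral.integral_nonneg ht.1
        fun s _ => integral_nonneg fun x => dissipationDen_nonneg p u v (x, s))),
    energy_identity hp hu heq hT hsupp d ht]

end EnergyIdentity

/-- second-order energy identity for any first-order space-time
derivative `v = ∂_{x_i}u` (j = 0,1,2) or `v = ∂ₜu` (j = 3). -/
theorem second_order_energy_identity
    (p : ℝ) (hp : 3 ≤ p)
    (u : E3 × ℝ → ℝ) (hu : ContDiff ℝ 3 u)
    (heq : ∀ (x : E3) (t : ℝ), 0 ≤ t →
      pt (pt u) (x, t) - lap u (x, t) + |pt u (x, t)| ^ (p - 1) * pt u (x, t) = 0)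
    (hsupp : SpatialCptSupp u) :
    ∀ j : Fin 4, ∀ t : ℝ, 0 ≤ t →
      ((1 / 2 : ℝ≥0∞) * ∫⁻ x : E3, ENNReal.ofReal (eDen (pdir (dir4 j) u) (x, t)))
          + ENNReal.ofReal p *
            (∫⁻ s in Icc (0 : ℝ) t, ∫⁻ x : E3,
              ENNReal.ofReal (|pt u (x, s)| ^ (p - 1) * (pt (pdir (dir4 j) u) (x, s)) ^ 2))
        = (1 / 2 : ℝ≥0∞) * ∫⁻ x : E3, ENNReal.ofReal (eDen (pdir (dir4 j) u) (x, 0)) := by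
  intro j t ht
  obtain ⟨R, hR⟩ := hsupp.exists_eqOn_exteriorCylinder (T := t + 1) (by linarith)
  exact energy_identity_lintegral (by linarith) hu heq (by linarith) hR (dir4 j)
    ⟨ht, by linarith⟩
end
end

section
/- Let f : (0,∞) → ℝ be a C¹ function that vanishes outside a compact set. Then for every R > 0, R² f(R)² ≤ 2 (∫_R^∞ f(r)² r² dr)^{1/2} (∫_R^∞ f'(r)² r² dr)^{1/2}. Consequently, if U(x) = f(|x|) on ℝ³, then R|U(x)| ≤ C‖U‖_{H¹(|x|>R)} for |x| = R with an absolute constant C. -/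
open MeasureTheory Set Real Filter
open scoped Topology

/-! Write `f'` for the derivative of `f`. Since `f` vanishes for large `r`, the fundamental theorem
of calculus on `[R, ∞)` gives `R² f(R)² = -∫_R^∞ (r² f²)' dr = -∫_R^∞ (2 r f² + 2 r² f f') dr`.
The first term has a sign, so `R² f(R)² ≤ 2 ∫_R^∞ |r f| |r f'| dr`, and Cauchy–Schwarz gives the
first inequality. The second follows from `2 √A √B ≤ A + B` and `4π ≥ 1`. -/

theorem eventuallyEq_zero_atTop_of_isCompact {β : Type*} [Zero β] {f : ℝ → β} {K : Set ℝ}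
    {a : ℝ} (hK : IsCompact K) (hf : ∀ r ∈ Ioi a, r ∉ K → f r = 0) : f =ᶠ[atTop] 0 := by
  obtain ⟨M, hM⟩ := hK.bddAbove
  filter_upwards [eventually_gt_atTop a, eventually_gt_atTop M] with r hra hrM
  exact hf r hra fun hrK => (hM hrK).not_gt hrM

theorem derivWithin_eventuallyEq_zero_atTop {E : Type*} [NormedAddCommGroup E]
    [NormedSpace ℝ E] {f : ℝ → E} (s : Set ℝ) (hf : f =ᶠ[atTop] 0) :
    derivWithin f s =ᶠ[atTop] 0 := by
  obtain ⟨b, hb⟩ := eventually_atTop.1 hf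
  filter_upwards [eventually_gt_atTop b] with x hx
  have hfx : f =ᶠ[𝓝 x] 0 := eventually_of_mem (Ioi_mem_nhds hx) fun y hy => hb y hy.le
  rw [(hfx.filter_mono nhdsWithin_le_nhds).derivWithin_eq (hb x hx.le), derivWithin_zero]

theorem integrableOn_Ioi_of_continuousOn_of_eventuallyEq_zero {u : ℝ → ℝ} {R : ℝ}
    (hu : ContinuousOn u (Ici R)) (hu0 : u =ᶠ[atTop] 0) : IntegrableOn u (Ioi R) := by
  obtain ⟨b, hb⟩ := eventually_atTop.1 hu0
  have hIcc : IntegrableOn u (Icc R b) := (hu.mono Icc_subset_Ici_self).integrableOn_Icc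
  refine hIcc.of_forall_sdiff_eq_zero measurableSet_Ioi fun x ⟨hRx, hx⟩ => hb x ?_
  by_contra! hxb
  exact hx ⟨le_of_lt hRx, hxb.le⟩

theorem memLp_two_Ioi_of_continuousOn_of_eventuallyEq_zero {u : ℝ → ℝ} {R : ℝ}
    (hu : ContinuousOn u (Ici R)) (hu0 : u =ᶠ[atTop] 0) :
    MemLp u 2 (volume.restrict (Ioi R)) := by
  refine (memLp_two_iff_integrable_sq
    ((hu.mono Ioi_subset_Ici_self).aestronglyMeasurable measurableSet_Ioi)).2 ?_
  exact integrableOn_Ioi_of_continuousOn_of_eventuallyEq_zero (hu.pow 2)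
    (hu0.mono fun x hx => by simp [hx])

theorem integral_abs_mul_abs_le_sqrt_mul_sqrt {α : Type*} [MeasurableSpace α] {μ : Measure α}
    {u v : α → ℝ} (hu : MemLp u 2 μ) (hv : MemLp v 2 μ) :
    ∫ x, |u x| * |v x| ∂μ ≤ √(∫ x, u x ^ 2 ∂μ) * √(∫ x, v x ^ 2 ∂μ) := by
  have h2 : ENNReal.ofReal 2 = 2 := ENNReal.ofReal_ofNat 2
  have := integral_mul_norm_le_Lp_mul_Lq (p := 2) (q := 2) (by norm_num [Real.holderConjugate_iff])
    (h2 ▸ hu) (h2 ▸ hv)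
  simpa only [Real.norm_eq_abs, sq_abs, Real.rpow_two, ← Real.sqrt_eq_rpow] using this

theorem sq_mul_sq_le_two_mul_integral {f f' : ℝ → ℝ} {a b : ℝ} (ha : 0 ≤ a) (hab : a ≤ b)
    (hf : ContinuousOn f (Icc a b)) (hd : ∀ x ∈ Ioo a b, HasDerivAt f (f' x) x)
    (hint : IntegrableOn (fun x => |f x * x| * |f' x * x|) (Icc a b)) (hfb : f b = 0) :
    a ^ 2 * f a ^ 2 ≤ 2 * ∫ x in a..b, |f x * x| * |f' x * x| := by
  have hderiv : ∀ x ∈ Ioo a b, HasDerivWithinAt (fun y => -(y ^ 2 * f y ^ 2))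
      (-(2 * x * f x ^ 2 + x ^ 2 * (2 * f x * f' x))) (Ioi x) x := fun x hx =>
    (((hasDerivAt_pow 2 x).fun_mul ((hd x hx).fun_pow 2)).fun_neg.congr_deriv
      (by norm_num)).hasDerivWithinAt
  have hbound : ∀ x ∈ Ioo a b,
      -(2 * x * f x ^ 2 + x ^ 2 * (2 * f x * f' x)) ≤ 2 * (|f x * x| * |f' x * x|) := by
    intro x hx
    have hx0 : 0 < x := ha.trans_lt hx.1
    have habs : |f x * x| * |f' x * x| = x ^ 2 * |f x * f' x| := by
      rw [abs_mul, abs_mul, abs_mul, abs_of_pos hx0]; ring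
    rw [habs]
    nlinarith [neg_abs_le (f x * f' x), mul_nonneg hx0.le (sq_nonneg (f x)), sq_nonneg x]
  simpa [hfb, intervalIntegral.integral_const_mul] using
    intervalIntegral.sub_le_integral_of_hasDeriv_right_of_le hab (by fun_prop) hderiv
      (hint.const_mul 2) hbound

theorem sq_mul_sq_le_two_mul_sqrt_integral_mul_sqrt_integral {f : ℝ → ℝ} {R : ℝ}
    (hf : ContDiffOn ℝ 1 f (Ioi 0)) (hf0 : f =ᶠ[atTop] 0) (hR : 0 < R) :
    R ^ 2 * f R ^ 2 ≤ 2 * √(∫ r in Ioi R, f r ^ 2 * r ^ 2) *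
      √(∫ r in Ioi R, derivWithin f (Ioi 0) r ^ 2 * r ^ 2) := by
  set f' := derivWithin f (Ioi 0)
  have hd : ∀ x ∈ Ioi 0, HasDerivAt f (f' x) x := fun x hx =>
    (hf.differentiableOn one_ne_zero x hx).hasDerivWithinAt.hasDerivAt (Ioi_mem_nhds hx)
  have hRi : Ici R ⊆ Ioi 0 := Ici_subset_Ioi.2 hR
  have hfc : ContinuousOn f (Ici R) := hf.continuousOn.mono hRi
  have hf'c : ContinuousOn f' (Ici R) :=
    (hf.continuousOn_derivWithin (uniqueDiffOn_Ioi 0) le_rfl).mono hRi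
  have hf'0 : f' =ᶠ[atTop] 0 := derivWithin_eventuallyEq_zero_atTop _ hf0
  obtain ⟨b, hb⟩ := ((hf0.and hf'0).and (eventually_ge_atTop R)).exists_forall_of_atTop
  have hRb : R ≤ b := (hb b le_rfl).2
  have hφc : ContinuousOn (fun x => |f x * x| * |f' x * x|) (Ici R) := by fun_prop
  have hφ0 : ∀ x ∈ Ioi R \ Ioc R b, |f x * x| * |f' x * x| = 0 := fun x ⟨hRx, hx⟩ => by
    have hbx : b ≤ x := (not_le.1 fun hxb => hx ⟨hRx, hxb⟩).le
    simp [(hb x hbx).1.1]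
  calc R ^ 2 * f R ^ 2 ≤ 2 * ∫ x in R..b, |f x * x| * |f' x * x| :=
        sq_mul_sq_le_two_mul_integral hR.le hRb (hfc.mono Icc_subset_Ici_self)
          (fun x hx => hd x (hRi (Ioo_subset_Icc_self.trans Icc_subset_Ici_self hx)))
          (hφc.mono Icc_subset_Ici_self).integrableOn_Icc (hb b le_rfl).1.1
    _ = 2 * ∫ x in Ioi R, |f x * x| * |f' x * x| := by
        rw [intervalIntegral.integral_of_le hRb, setIntegral_eq_of_subset_of_forall_sdiff_eq_zero
          measurableSet_Ioi Ioc_subset_Ioi_self hφ0]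
    _ ≤ 2 * (√(∫ x in Ioi R, (f x * x) ^ 2) * √(∫ x in Ioi R, (f' x * x) ^ 2)) := by
        gcongr
        exact integral_abs_mul_abs_le_sqrt_mul_sqrt
          (memLp_two_Ioi_of_continuousOn_of_eventuallyEq_zero (by fun_prop)
            (hf0.mono fun x hx => by simp [hx]))
          (memLp_two_Ioi_of_continuousOn_of_eventuallyEq_zero (by fun_prop)
            (hf'0.mono fun x hx => by simp [hx]))
    _ = _ := by simp only [mul_pow, mul_assoc]

theorem mul_abs_le_sqrt_integral_add {f : ℝ → ℝ} {R : ℝ} (hf : ContDiffOn ℝ 1 f (Ioi 0))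
    (hf0 : f =ᶠ[atTop] 0) (hR : 0 < R) :
    R * |f R| ≤ √(∫ r in Ioi R, (f r ^ 2 + derivWithin f (Ioi 0) r ^ 2) * r ^ 2) := by
  set f' := derivWithin f (Ioi 0)
  have hRi : Ici R ⊆ Ioi 0 := Ici_subset_Ioi.2 hR
  have hfc : ContinuousOn f (Ici R) := hf.continuousOn.mono hRi
  have hf'c : ContinuousOn f' (Ici R) :=
    (hf.continuousOn_derivWithin (uniqueDiffOn_Ioi 0) le_rfl).mono hRi
  have hf'0 : f' =ᶠ[atTop] 0 := derivWithin_eventuallyEq_zero_atTop _ hf0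
  set A := ∫ r in Ioi R, f r ^ 2 * r ^ 2
  set B := ∫ r in Ioi R, f' r ^ 2 * r ^ 2
  have hsum : ∫ r in Ioi R, (f r ^ 2 + f' r ^ 2) * r ^ 2 = A + B := by
    simp_rw [add_mul]
    exact integral_add
      (integrableOn_Ioi_of_continuousOn_of_eventuallyEq_zero (by fun_prop)
        (hf0.mono fun x hx => by simp [hx]))
      (integrableOn_Ioi_of_continuousOn_of_eventuallyEq_zero (by fun_prop)
        (hf'0.mono fun x hx => by simp [hx]))
  have hA : 0 ≤ A := setIntegral_nonneg measurableSet_Ioi fun r _ => by positivity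
  have hB : 0 ≤ B := setIntegral_nonneg measurableSet_Ioi fun r _ => by positivity
  rw [hsum]
  refine Real.le_sqrt_of_sq_le ?_
  calc (R * |f R|) ^ 2 = R ^ 2 * f R ^ 2 := by rw [mul_pow, sq_abs]
    _ ≤ 2 * √A * √B := sq_mul_sq_le_two_mul_sqrt_integral_mul_sqrt_integral hf hf0 hR
    _ ≤ A + B := by nlinarith [sq_nonneg (√A - √B), Real.sq_sqrt hA, Real.sq_sqrt hB]

/-- strong version of Strauss's radial lemma.  For a C¹ function `f` on
`(0,∞)` vanishing outside a compact set, `R² f(R)² ≤ 2 (∫_R^∞ f² r² dr)^{1/2}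
(∫_R^∞ f'² r² dr)^{1/2}`, and consequently for the radial function `U(x) = f(|x|)` on ℝ³
one has `R |U| ≤ C ‖U‖_{H¹(|x|>R)}` (expressed through the radial integral formulas
`∫_{|x|>R} (U² + |∇U|²) dx = 4π ∫_R^∞ (f² + f'²) r² dr`). -/
theorem strong_strauss_radial_lemma :
    ∃ C > (0 : ℝ), ∀ f : ℝ → ℝ, ContDiffOn ℝ 1 f (Ioi 0) →
      (∃ K : Set ℝ, IsCompact K ∧ ∀ r ∈ Ioi (0 : ℝ), r ∉ K → f r = 0) →
      ∀ R : ℝ, 0 < R →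
        R ^ 2 * f R ^ 2
            ≤ 2 * Real.sqrt (∫ r in Ioi R, f r ^ 2 * r ^ 2) *
                Real.sqrt (∫ r in Ioi R, derivWithin f (Ioi 0) r ^ 2 * r ^ 2) ∧
        R * |f R|
            ≤ C * Real.sqrt
                (4 * π * ∫ r in Ioi R, (f r ^ 2 + derivWithin f (Ioi 0) r ^ 2) * r ^ 2) := by
  refine ⟨1, one_pos, fun f hf ⟨K, hK, hfK⟩ R hR => ?_⟩
  have hf0 : f =ᶠ[atTop] 0 := eventuallyEq_zero_atTop_of_isCompact hK hfK
  refine ⟨sq_mul_sq_le_two_mul_sqrt_integral_mul_sqrt_integral hf hf0 hR, ?_⟩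
  have hpi : 1 ≤ 4 * π := by linarith [pi_gt_three]
  calc R * |f R| ≤ √(∫ r in Ioi R, (f r ^ 2 + derivWithin f (Ioi 0) r ^ 2) * r ^ 2) :=
        mul_abs_le_sqrt_integral_add hf hf0 hR
    _ ≤ 1 * √(4 * π * ∫ r in Ioi R, (f r ^ 2 + derivWithin f (Ioi 0) r ^ 2) * r ^ 2) := by
        rw [one_mul]
        gcongr
        exact le_mul_of_one_le_left
          (setIntegral_nonneg measurableSet_Ioi fun r _ => by positivity) hpi
end

section
/- Let I ⊆ ℝ be an interval, let X₊, X₋ : ℝ × I → ℝ be C¹ and let a : ℝ × I → ℝ be continuous with a(x,t) ≥ 0 everywhere. Suppose (∂ₜ − ∂ₓ)X₊ + a(X₊ + X₋) = 0 and (∂ₜ + ∂ₓ)X₋ + a(X₊ + X₋) = 0 pointwise on ℝ × I. Then for every natural number k ≥ 1, the pointwise differential inequality ∂ₜ(X₊^{2k} + X₋^{2k}) + ∂ₓ(X₋^{2k} − X₊^{2k}) ≤ 0 holds on ℝ × I. -/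
/-!
By the chain rule, multiplying the equation for `X₊` by `2k X₊^{2k-1}`, the one for `X₋` by
`2k X₋^{2k-1}` and adding turns the left-hand side into
`-2k a (X₊ + X₋) (X₊^{2k-1} + X₋^{2k-1})`. This is `≤ 0` since `a ≥ 0` and `t ↦ t^{2k-1}` is odd
and increasing, so `X₊ + X₋ = X₊ - (-X₋)` and `X₊^{2k-1} + X₋^{2k-1}` have the same sign.
-/

open MeasureTheory Set Real
open scoped ENNReal

noncomputable section

/-- Partial derivative in the first (space) variable of a function on ℝ × ℝ. -/
def d1 (g : ℝ × ℝ → ℝ) : ℝ × ℝ → ℝ := fun z => fderiv ℝ g z ((1 : ℝ), (0 : ℝ))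

/-- Partial derivative in the second (time) variable of a function on ℝ × ℝ. -/
def d2 (g : ℝ × ℝ → ℝ) : ℝ × ℝ → ℝ := fun z => fderiv ℝ g z ((0 : ℝ), (1 : ℝ))

theorem Odd.add_mul_pow_add_pow_nonneg {R : Type*} [CommRing R] [LinearOrder R]
    [IsStrictOrderedRing R] {n : ℕ} (hn : Odd n) (x y : R) :
    0 ≤ (x + y) * (x ^ n + y ^ n) := by
  have h := (monovary_id_iff.2 hn.strictMono_pow.monotone).sub_mul_sub_nonneg x (-y)
  rw [hn.neg_pow, id, id] at h
  linear_combination h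

theorem d2_add_d1_pow_eq {u v : ℝ × ℝ → ℝ} {z : ℝ × ℝ} (hu : DifferentiableAt ℝ u z)
    (hv : DifferentiableAt ℝ v z) (n : ℕ) :
    d2 (fun w => u w ^ n + v w ^ n) z + d1 (fun w => v w ^ n - u w ^ n) z =
      n * (u z ^ (n - 1) * (d2 u z - d1 u z) + v z ^ (n - 1) * (d2 v z + d1 v z)) := by
  unfold d1 d2
  rw [fderiv_fun_add (hu.fun_pow n) (hv.fun_pow n), fderiv_fun_sub (hv.fun_pow n) (hu.fun_pow n),
    fderiv_fun_pow n hu, fderiv_fun_pow n hv]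
  simp only [nsmul_eq_mul, add_apply, smul_apply, smul_eq_mul, sub_apply]
  ring

theorem pointwise_differential_inequality_general
    (I : Set ℝ)
    (Xp Xm a : ℝ × ℝ → ℝ)
    (hXp : ContDiff ℝ 1 Xp) (hXm : ContDiff ℝ 1 Xm)
    (hann : ∀ z : ℝ × ℝ, z.2 ∈ I → 0 ≤ a z)
    (heqp : ∀ z : ℝ × ℝ, z.2 ∈ I → d2 Xp z - d1 Xp z + a z * (Xp z + Xm z) = 0)
    (heqm : ∀ z : ℝ × ℝ, z.2 ∈ I → d2 Xm z + d1 Xm z + a z * (Xp z + Xm z) = 0) :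
    ∀ k : ℕ, 1 ≤ k → ∀ z : ℝ × ℝ, z.2 ∈ I →
      d2 (fun w => Xp w ^ (2 * k) + Xm w ^ (2 * k)) z
        + d1 (fun w => Xm w ^ (2 * k) - Xp w ^ (2 * k)) z ≤ 0 := by
  intro k hk z hz
  have hodd : Odd (2 * k - 1) := ⟨k - 1, by omega⟩
  have hdiss : 0 ≤ (2 * k : ℝ) *
      (a z * ((Xp z + Xm z) * (Xp z ^ (2 * k - 1) + Xm z ^ (2 * k - 1)))) :=
    mul_nonneg (by positivity) (mul_nonneg (hann z hz) (hodd.add_mul_pow_add_pow_nonneg _ _))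
  rw [d2_add_d1_pow_eq (hXp.differentiable one_ne_zero z) (hXm.differentiable one_ne_zero z)]
  push_cast
  linear_combination (2 * k : ℝ) * (Xp z ^ (2 * k - 1) * heqp z hz + Xm z ^ (2 * k - 1) * heqm z hz)
    + hdiss

/-- the pointwise differential inequality
`∂ₜ(X₊^{2k} + X₋^{2k}) + ∂ₓ(X₋^{2k} − X₊^{2k}) ≤ 0` for the damped transport system. -/
theorem pointwise_differential_inequality
    (I : Set ℝ) (hI : I.OrdConnected)
    (Xp Xm a : ℝ × ℝ → ℝ)
    (hXp : ContDiff ℝ 1 Xp) (hXm : ContDiff ℝ 1 Xm) (ha : Continuous a)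
    (hann : ∀ z : ℝ × ℝ, z.2 ∈ I → 0 ≤ a z)
    (heqp : ∀ z : ℝ × ℝ, z.2 ∈ I → d2 Xp z - d1 Xp z + a z * (Xp z + Xm z) = 0)
    (heqm : ∀ z : ℝ × ℝ, z.2 ∈ I → d2 Xm z + d1 Xm z + a z * (Xp z + Xm z) = 0) :
    ∀ k : ℕ, 1 ≤ k → ∀ z : ℝ × ℝ, z.2 ∈ I →
      d2 (fun w => Xp w ^ (2 * k) + Xm w ^ (2 * k)) z
        + d1 (fun w => Xm w ^ (2 * k) - Xp w ^ (2 * k)) z ≤ 0 :=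
  pointwise_differential_inequality_general I Xp Xm a hXp hXm hann heqp heqm
end
end

section
/- Let p ≥ 3 be a real number and let u : ℝ³ × [0,∞) → ℝ be a C³ solution of ∂ₜ²u − Δu + |∂ₜu|^{p−1}∂ₜu = 0 that is radially symmetric in x and spatially compactly supported on compact time intervals, with radial profile f(r,t) = u(r e₁, t). Define X₊(r,t) = (∂ₜ + ∂ᵣ)(r ∂ₜf(r,t)) and X₋(r,t) = (∂ₜ − ∂ᵣ)(r ∂ₜf(r,t)). Then for all t ≥ 0, max( sup_{r>0}|X₊(r,t)|, sup_{r>0}|X₋(r,t)| ) ≤ max( sup_{r>0}|X₊(r,0)|, sup_{r>0}|X₋(r,0)| ). -/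
/-!
With `f` the radial profile and `V = r ∂ₜf`, the equation multiplied by `r` reads
`(r f)_tt - (r f)_rr + r |f_t|^(p-1) f_t = 0` for all `r` (by parity), and its time derivative is
`V_tt - V_rr + p |f_t|^(p-1) V_t = 0`. For the Riemann invariants `X± = V_t ± V_r` this is the
damped transport system `(∂ₜ ∓ ∂ᵣ) X± = -k (X₊ + X₋)` with `k = p |f_t|^(p-1) / 2 ≥ 0`. Along a
characteristic `X₊²` (or `X₋²`) relaxes from its initial value towards any common bound `Z` of `X₊²`
and `X₋²`; taking `Z` the supremum over a time strip shows that it cannot exceed the initial one.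
The reflection `X₊(-r) = -X₋(r)` identifies the suprema over `r ∈ ℝ` with those over `r > 0`.
-/

open MeasureTheory Set Real
open scoped ENNReal

noncomputable section

/-- A fixed unit vector in ℝ³. -/
def e1 : E3 := EuclideanSpace.single 0 1

/-- The radial profile `f(r, t) = u(r e₁, t)` of a function on ℝ³ × ℝ. -/
def prof (u : E3 × ℝ → ℝ) : ℝ × ℝ → ℝ := fun z => u (z.1 • e1, z.2)

/-- `X₊(r,t) = (∂ₜ + ∂ᵣ)(r ∂ₜ f(r,t))` for the radial profile `f` of `u`. -/
def Xplus (u : E3 × ℝ → ℝ) : ℝ × ℝ → ℝ := fun z =>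
  d2 (fun w : ℝ × ℝ => w.1 * d2 (prof u) w) z + d1 (fun w : ℝ × ℝ => w.1 * d2 (prof u) w) z

/-- `X₋(r,t) = (∂ₜ − ∂ᵣ)(r ∂ₜ f(r,t))` for the radial profile `f` of `u`. -/
def Xminus (u : E3 × ℝ → ℝ) : ℝ × ℝ → ℝ := fun z =>
  d2 (fun w : ℝ × ℝ => w.1 * d2 (prof u) w) z - d1 (fun w : ℝ × ℝ => w.1 * d2 (prof u) w) z


section PartialDerivatives

variable {g h : ℝ × ℝ → ℝ}

theorem d1_apply (g : ℝ × ℝ → ℝ) (z : ℝ × ℝ) : d1 g z = fderiv ℝ g z (1, 0) := rfl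

theorem d2_apply (g : ℝ × ℝ → ℝ) (z : ℝ × ℝ) : d2 g z = fderiv ℝ g z (0, 1) := rfl

theorem hasDerivAt_d1 {a b : ℝ} (hg : DifferentiableAt ℝ g (a, b)) :
    HasDerivAt (fun r => g (r, b)) (d1 g (a, b)) a :=
  hg.hasFDerivAt.comp_hasDerivAt a ((hasDerivAt_id a).prodMk (hasDerivAt_const a b))

theorem hasDerivAt_d2 {a b : ℝ} (hg : DifferentiableAt ℝ g (a, b)) :
    HasDerivAt (fun t => g (a, t)) (d2 g (a, b)) b :=
  hg.hasFDerivAt.comp_hasDerivAt b ((hasDerivAt_const b a).prodMk (hasDerivAt_id b))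

theorem ContDiff.d1 {m n : WithTop ℕ∞} (hg : ContDiff ℝ n g) (hmn : m + 1 ≤ n) :
    ContDiff ℝ m (d1 g) :=
  (hg.fderiv_right hmn).clm_apply contDiff_const

theorem ContDiff.d2 {m n : WithTop ℕ∞} (hg : ContDiff ℝ n g) (hmn : m + 1 ≤ n) :
    ContDiff ℝ m (d2 g) :=
  (hg.fderiv_right hmn).clm_apply contDiff_const

theorem d1_d2_comm (hg : ContDiff ℝ 2 g) (z : ℝ × ℝ) : d1 (d2 g) z = d2 (d1 g) z := by
  have hg' : DifferentiableAt ℝ (fderiv ℝ g) z :=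
    ((hg.fderiv_right (m := 1) le_rfl).differentiable one_ne_zero).differentiableAt
  have key (v w : ℝ × ℝ) :
      fderiv ℝ (fun y => fderiv ℝ g y v) z w = fderiv ℝ (fderiv ℝ g) z w v := by
    rw [fderiv_clm_apply hg' (differentiableAt_const v)]
    simp
  change fderiv ℝ (fun y => fderiv ℝ g y (0, 1)) z (1, 0)
    = fderiv ℝ (fun y => fderiv ℝ g y (1, 0)) z (0, 1)
  rw [key, key]
  exact hg.contDiffAt.isSymmSndFDerivAt (by simp) _ _

theorem d1_add {z : ℝ × ℝ} (hg : DifferentiableAt ℝ g z) (hh : DifferentiableAt ℝ h z) :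
    d1 (fun w => g w + h w) z = d1 g z + d1 h z := by
  simp [d1, fderiv_fun_add hg hh]

theorem d2_add {z : ℝ × ℝ} (hg : DifferentiableAt ℝ g z) (hh : DifferentiableAt ℝ h z) :
    d2 (fun w => g w + h w) z = d2 g z + d2 h z := by
  simp [d2, fderiv_fun_add hg hh]

theorem d1_sub {z : ℝ × ℝ} (hg : DifferentiableAt ℝ g z) (hh : DifferentiableAt ℝ h z) :
    d1 (fun w => g w - h w) z = d1 g z - d1 h z := by
  simp [d1, fderiv_fun_sub hg hh]

theorem d2_sub {z : ℝ × ℝ} (hg : DifferentiableAt ℝ g z) (hh : DifferentiableAt ℝ h z) :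
    d2 (fun w => g w - h w) z = d2 g z - d2 h z := by
  simp [d2, fderiv_fun_sub hg hh]

theorem d1_fst_mul {z : ℝ × ℝ} (hg : DifferentiableAt ℝ g z) :
    d1 (fun w => w.1 * g w) z = g z + z.1 * d1 g z := by
  simp [d1, fderiv_fun_mul differentiableAt_fst hg, fderiv_fst]
  ring

theorem d2_fst_mul {z : ℝ × ℝ} (hg : DifferentiableAt ℝ g z) :
    d2 (fun w => w.1 * g w) z = z.1 * d2 g z := by
  simp [d2, fderiv_fun_mul differentiableAt_fst hg, fderiv_fst]

theorem d2_sub_d1_of_d2_add_d1 {V : ℝ × ℝ → ℝ} (hV : ContDiff ℝ 2 V) (z : ℝ × ℝ) :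
    d2 (fun w => d2 V w + d1 V w) z - d1 (fun w => d2 V w + d1 V w) z
      = d2 (d2 V) z - d1 (d1 V) z := by
  have h1 : Differentiable ℝ (d1 V) := (hV.d1 (m := 1) le_rfl).differentiable one_ne_zero
  have h2 : Differentiable ℝ (d2 V) := (hV.d2 (m := 1) le_rfl).differentiable one_ne_zero
  rw [d2_add (h2 z) (h1 z), d1_add (h2 z) (h1 z), d1_d2_comm hV]
  ring

theorem d2_add_d1_of_d2_sub_d1 {V : ℝ × ℝ → ℝ} (hV : ContDiff ℝ 2 V) (z : ℝ × ℝ) :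
    d2 (fun w => d2 V w - d1 V w) z + d1 (fun w => d2 V w - d1 V w) z
      = d2 (d2 V) z - d1 (d1 V) z := by
  have h1 : Differentiable ℝ (d1 V) := (hV.d1 (m := 1) le_rfl).differentiable one_ne_zero
  have h2 : Differentiable ℝ (d2 V) := (hV.d2 (m := 1) le_rfl).differentiable one_ne_zero
  rw [d2_sub (h2 z) (h1 z), d1_sub (h2 z) (h1 z), d1_d2_comm hV]
  ring

end PartialDerivatives

theorem fderiv_eq_of_eqOn {E F : Type*} [NormedAddCommGroup E] [NormedSpace ℝ E]
    [NormedAddCommGroup F] [NormedSpace ℝ F] {g h : E → F} {s : Set E} {z : E}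
    (hs : UniqueDiffWithinAt ℝ s z) (hgh : EqOn g h s) (hz : z ∈ s)
    (hg : DifferentiableAt ℝ g z) (hh : DifferentiableAt ℝ h z) :
    fderiv ℝ g z = fderiv ℝ h z := by
  rw [← hg.fderivWithin hs, ← hh.fderivWithin hs, fderivWithin_congr' hgh hz]

def HasRParity (a : ℝ) (g : ℝ × ℝ → ℝ) : Prop :=
  ∀ r t : ℝ, 0 ≤ t → g (-r, t) = a * g (r, t)

namespace HasRParity

variable {a : ℝ} {g : ℝ × ℝ → ℝ}

theorem fderiv_apply (hpar : HasRParity a g) (hg : Differentiable ℝ g) {r t : ℝ} (ht : 0 ≤ t)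
    (v : ℝ × ℝ) : fderiv ℝ g (-r, t) (-v.1, v.2) = a * fderiv ℝ g (r, t) v := by
  let ρ : ℝ × ℝ →L[ℝ] ℝ × ℝ := (-ContinuousLinearMap.id ℝ ℝ).prodMap (ContinuousLinearMap.id ℝ ℝ)
  have hρ (w : ℝ × ℝ) : ρ w = (-w.1, w.2) := rfl
  have hH : UniqueDiffOn ℝ ((univ : Set ℝ) ×ˢ Ici (0 : ℝ)) :=
    uniqueDiffOn_univ.prod (uniqueDiffOn_Ici 0)
  have heq : EqOn (g ∘ ρ) (fun w => a * g w) ((univ : Set ℝ) ×ˢ Ici (0 : ℝ)) :=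
    fun w hw => hpar w.1 w.2 hw.2
  have hz : ((r, t) : ℝ × ℝ) ∈ (univ : Set ℝ) ×ˢ Ici (0 : ℝ) := ⟨trivial, ht⟩
  have key := fderiv_eq_of_eqOn (hH _ hz) heq hz
    ((hg _).comp _ ρ.differentiableAt) ((hg _).const_mul a)
  rw [fderiv_comp _ (hg _) ρ.differentiableAt, fderiv_const_mul (hg _), ρ.fderiv] at key
  simpa [hρ] using congrArg (· v) key

theorem d1 (hpar : HasRParity a g) (hg : Differentiable ℝ g) : HasRParity (-a) (d1 g) := by
  intro r t ht
  have h := hpar.fderiv_apply hg (r := r) ht (1, 0)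
  rw [show ((-(1, 0).1, (1, 0).2) : ℝ × ℝ) = -(1, 0) by simp, map_neg] at h
  rw [d1_apply, d1_apply]
  linarith

theorem d2 (hpar : HasRParity a g) (hg : Differentiable ℝ g) : HasRParity a (d2 g) := by
  intro r t ht
  rw [d2_apply, d2_apply]
  simpa using hpar.fderiv_apply hg (r := r) ht (0, 1)

theorem fst_mul (hpar : HasRParity a g) : HasRParity (-a) (fun w => w.1 * g w) := by
  intro r t ht
  simp only [hpar r t ht]
  ring

theorem apply_zero_eq_zero (hpar : HasRParity (-1) g) {t : ℝ} (ht : 0 ≤ t) : g (0, t) = 0 := by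
  have := hpar 0 t ht
  rw [neg_zero] at this
  linarith

end HasRParity

section Support

variable {R T : ℝ}

theorem uniqueDiffOn_abs_gt_prod_Icc (hT : 0 < T) :
    UniqueDiffOn ℝ ({r : ℝ | R < |r|} ×ˢ Icc 0 T) :=
  (isOpen_lt continuous_const continuous_abs).uniqueDiffOn.prod (uniqueDiffOn_Icc hT)

theorem eqOn_zero_d1_d2 {g : ℝ × ℝ → ℝ} {s : Set (ℝ × ℝ)} (hs : UniqueDiffOn ℝ s)
    (hg : Differentiable ℝ g) (h : EqOn g 0 s) : EqOn (d1 g) 0 s ∧ EqOn (d2 g) 0 s := by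
  have hzero : ∀ z ∈ s, fderiv ℝ g z = 0 := fun z hz => by
    rw [fderiv_eq_of_eqOn (hs z hz) h hz (hg z) (differentiableAt_const 0), fderiv_zero]
    rfl
  exact ⟨fun z hz => by simp [d1, hzero z hz], fun z hz => by simp [d2, hzero z hz]⟩

theorem exists_abs_le_of_eqOn_zero {g : ℝ × ℝ → ℝ} (hg : Continuous g)
    (h : EqOn g 0 ({r : ℝ | R < |r|} ×ˢ Icc 0 T)) : ∃ B, ∀ r, ∀ t ∈ Icc 0 T, |g (r, t)| ≤ B := by
  obtain ⟨B, hB⟩ := (isCompact_Icc.prod isCompact_Icc : IsCompact (Icc (-R) R ×ˢ Icc 0 T))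
    |>.exists_bound_of_continuousOn hg.continuousOn
  refine ⟨max B 0, fun r t ht => ?_⟩
  by_cases hr : |r| ≤ R
  · exact (hB (r, t) ⟨abs_le.mp hr, ht⟩).trans (le_max_left _ _)
  · rw [h (show (r, t) ∈ {r : ℝ | R < |r|} ×ˢ Icc 0 T from ⟨lt_of_not_ge hr, ht⟩)]
    simp

end Support

section RadialLaplacian

open scoped RealInnerProductSpace Topology

variable {E : Type*} [NormedAddCommGroup E] [InnerProductSpace ℝ E]

theorem hasFDerivAt_norm_of_ne_zero {x : E} (hx : x ≠ 0) :
    HasFDerivAt (fun y : E => ‖y‖) (‖x‖⁻¹ • innerSL ℝ x) x := by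
  have hx2 : ‖x‖ ^ 2 ≠ 0 := by positivity
  have h := (hasStrictFDerivAt_norm_sq x).hasFDerivAt.sqrt hx2
  simp only [Real.sqrt_sq (norm_nonneg _)] at h
  convert h using 1
  ext v
  simp
  field_simp

theorem hasFDerivAt_comp_norm {φ : ℝ → ℝ} {φ' : ℝ} {x : E} (hx : x ≠ 0)
    (hφ : HasDerivAt φ φ' ‖x‖) :
    HasFDerivAt (fun y => φ ‖y‖) ((φ' / ‖x‖) • innerSL ℝ x) x := by
  have h := hφ.comp_hasFDerivAt x (hasFDerivAt_norm_of_ne_zero hx)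
  rwa [smul_smul, ← div_eq_mul_inv] at h

theorem sum_fderiv_fderiv_comp_norm {ι : Type*} [Fintype ι] (b : OrthonormalBasis ι ℝ E)
    {φ φ' : ℝ → ℝ} {φ'' : ℝ} {x : E} (hx : x ≠ 0) (hφ : ∀ s, HasDerivAt φ (φ' s) s)
    (hφ' : HasDerivAt φ' φ'' ‖x‖) :
    ∑ i, fderiv ℝ (fun y => fderiv ℝ (fun z => φ ‖z‖) y (b i)) x (b i)
      = φ'' + (Fintype.card ι - 1) / ‖x‖ * φ' ‖x‖ := by
  have hxn : ‖x‖ ≠ 0 := norm_ne_zero_iff.mpr hx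
  have hψ : HasDerivAt (fun s => φ' s / s) ((φ'' * ‖x‖ - φ' ‖x‖ * 1) / ‖x‖ ^ 2) ‖x‖ :=
    hφ'.div (hasDerivAt_id _) hxn
  have hgrad : ∀ i, (fun y => fderiv ℝ (fun z => φ ‖z‖) y (b i)) =ᶠ[𝓝 x]
      fun y => φ' ‖y‖ / ‖y‖ * ⟪b i, y⟫ := by
    intro i
    filter_upwards [isOpen_compl_singleton.mem_nhds hx] with y hy
    simp [(hasFDerivAt_comp_norm hy (hφ _)).fderiv, real_inner_comm]
  have hsecond : ∀ i, fderiv ℝ (fun y => fderiv ℝ (fun z => φ ‖z‖) y (b i)) x (b i)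
      = (φ'' * ‖x‖ - φ' ‖x‖) / ‖x‖ ^ 2 / ‖x‖ * ⟪x, b i⟫ ^ 2 + φ' ‖x‖ / ‖x‖ := by
    intro i
    have hinner : HasFDerivAt (fun y => ⟪b i, y⟫) (innerSL ℝ (b i)) x :=
      (innerSL ℝ (b i)).hasFDerivAt
    have hmul : HasFDerivAt (fun y => φ' ‖y‖ / ‖y‖ * ⟪b i, y⟫) _ x :=
      (hasFDerivAt_comp_norm hx hψ).mul hinner
    rw [(hgrad i).fderiv_eq, hmul.fderiv]
    simp [real_inner_comm, b.orthonormal.1 i]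
    ring
  simp only [hsecond, Finset.sum_add_distrib, ← Finset.mul_sum, b.sum_sq_inner_left,
    Finset.sum_const, Finset.card_univ, nsmul_eq_mul]
  field_simp
  ring

end RadialLaplacian

theorem hasDerivAt_abs_rpow_mul_self {q : ℝ} (hq : 1 < q) (x : ℝ) :
    HasDerivAt (fun s => |s| ^ q * s) ((q + 1) * |x| ^ q) x := by
  have hsq : |x| ^ (q - 2) * x * x = |x| ^ q := by
    rcases eq_or_ne x 0 with rfl | hx
    · simp [zero_rpow (by linarith : q ≠ 0)]
    · rw [mul_assoc, ← sq, ← sq_abs, ← rpow_natCast, ← rpow_add (abs_pos.mpr hx)]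
      norm_num
  have h := (hasDerivAt_abs_rpow x hq).mul (hasDerivAt_id x)
  rw [show q * |x| ^ (q - 2) * x * id x + |x| ^ q * 1 = (q + 1) * |x| ^ q by
    simp only [id, mul_one]; linear_combination q * hsq] at h
  exact h

section RadialProfile

variable {u : E3 × ℝ → ℝ}

theorem fderiv_slice_apply_s13 {F : Type*} [NormedAddCommGroup F] [NormedSpace ℝ F]
    {G : E3 × ℝ → F} {y : E3} {t : ℝ} (hG : DifferentiableAt ℝ G (y, t)) (v : E3) :
    fderiv ℝ (fun z => G (z, t)) y v = fderiv ℝ G (y, t) (v, 0) := by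
  have h : HasFDerivAt (fun z => G (z, t)) ((fderiv ℝ G (y, t)).comp
      (ContinuousLinearMap.inl ℝ E3 ℝ)) y :=
    hG.hasFDerivAt.comp y (hasFDerivAt_prodMk_left y t)
  rw [h.fderiv]
  rfl

theorem hasDerivAt_pt {x : E3} {t : ℝ} (hu : DifferentiableAt ℝ u (x, t)) :
    HasDerivAt (fun s => u (x, s)) (pt u (x, t)) t :=
  hu.hasFDerivAt.comp_hasDerivAt t ((hasDerivAt_const t x).prodMk (hasDerivAt_id t))

theorem contDiff_prof {n : WithTop ℕ∞} (hu : ContDiff ℝ n u) : ContDiff ℝ n (prof u) :=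
  hu.comp ((contDiff_fst.smul contDiff_const).prodMk contDiff_snd)

theorem d2_prof (hu : Differentiable ℝ u) : d2 (prof u) = prof (pt u) := by
  funext z
  have hprof : Differentiable ℝ (prof u) :=
    hu.comp ((differentiable_fst.smul_const e1).prodMk differentiable_snd)
  exact (hasDerivAt_d2 (hprof z)).unique (hasDerivAt_pt (x := z.1 • e1) (hu _))

theorem norm_smul_e1 (r : ℝ) : ‖r • e1‖ = |r| := by
  simp [e1, norm_smul]

theorem RadialIn.apply_eq_prof (hrad : RadialIn u) {t : ℝ} (ht : 0 ≤ t) (y : E3) :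
    u (y, t) = prof u (‖y‖, t) :=
  hrad _ _ t ht (by rw [norm_smul_e1, abs_norm])

theorem RadialIn.hasRParity_prof (hrad : RadialIn u) : HasRParity 1 (prof u) := by
  intro r t ht
  rw [one_mul]
  exact hrad _ _ t ht (by rw [norm_smul_e1, norm_smul_e1, abs_neg])

theorem RadialIn.lap_smul_e1 (hrad : RadialIn u) (hu : ContDiff ℝ 2 u) {r t : ℝ} (hr : 0 < r)
    (ht : 0 ≤ t) :
    lap u (r • e1, t) = d1 (d1 (prof u)) (r, t) + 2 / r * d1 (prof u) (r, t) := by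
  have hdiff : Differentiable ℝ u := hu.differentiable (by norm_num)
  have hpx (i : Fin 3) : Differentiable ℝ (px i u) :=
    ((hu.fderiv_right (m := 1) le_rfl).clm_apply contDiff_const).differentiable one_ne_zero
  have hprof : ContDiff ℝ 2 (prof u) := contDiff_prof hu
  have hslice : (fun z => u (z, t)) = fun z => prof u (‖z‖, t) :=
    funext (hrad.apply_eq_prof ht)
  have hx : r • e1 ≠ 0 := by
    rw [← norm_ne_zero_iff, norm_smul_e1]
    exact (abs_pos.mpr hr.ne').ne'
  have hnorm : ‖r • e1‖ = r := by rw [norm_smul_e1, abs_of_pos hr]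
  have key := sum_fderiv_fderiv_comp_norm (EuclideanSpace.basisFun (Fin 3) ℝ) hx
    (φ := fun s => prof u (s, t)) (φ' := fun s => d1 (prof u) (s, t))
    (fun s => hasDerivAt_d1 ((hprof.differentiable (by norm_num)) _))
    (hasDerivAt_d1 (((hprof.d1 (m := 1) le_rfl).differentiable one_ne_zero) _))
  simp only [EuclideanSpace.basisFun_apply, Fintype.card_fin, hnorm] at key
  have hsecond (i : Fin 3) : px i (px i u) (r • e1, t) = fderiv ℝ
      (fun y => fderiv ℝ (fun z => prof u (‖z‖, t)) y (EuclideanSpace.single i 1)) (r • e1)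
      (EuclideanSpace.single i 1) := by
    have hfirst : (fun y => fderiv ℝ (fun z => u (z, t)) y (EuclideanSpace.single i 1))
        = fun y => px i u (y, t) :=
      funext fun y => fderiv_slice_apply_s13 (hdiff _) _
    rw [← hslice, hfirst, fderiv_slice_apply_s13 (hpx i _)]
    rfl
  simp only [lap, hsecond, key]
  norm_num

end RadialProfile

def SolvesDampedWave (p : ℝ) (u : E3 × ℝ → ℝ) : Prop :=
  ∀ (x : E3) (t : ℝ), 0 ≤ t →
    pt (pt u) (x, t) - lap u (x, t) + |pt u (x, t)| ^ (p - 1) * pt u (x, t) = 0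

namespace SolvesDampedWave

variable {p : ℝ} {u : E3 × ℝ → ℝ}

/-- Multiplied by `r`, the radial equation loses its singular term `2 ∂ᵣf / r` and extends to
`r ≤ 0` by parity. -/
theorem radial_eq (hsol : SolvesDampedWave p u) (hrad : RadialIn u) (hu : ContDiff ℝ 2 u)
    (r : ℝ) {t : ℝ} (ht : 0 ≤ t) :
    r * d2 (d2 (prof u)) (r, t) - r * d1 (d1 (prof u)) (r, t) - 2 * d1 (prof u) (r, t)
      + r * (|d2 (prof u) (r, t)| ^ (p - 1) * d2 (prof u) (r, t)) = 0 := by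
  set f := prof u
  have hf : ContDiff ℝ 2 f := contDiff_prof hu
  have hf1 : Differentiable ℝ f := hf.differentiable (by norm_num)
  have hd1f : Differentiable ℝ (d1 f) := (hf.d1 (m := 1) le_rfl).differentiable one_ne_zero
  have hd2f : Differentiable ℝ (d2 f) := (hf.d2 (m := 1) le_rfl).differentiable one_ne_zero
  have hpos : ∀ s, 0 < s → s * d2 (d2 f) (s, t) - s * d1 (d1 f) (s, t) - 2 * d1 f (s, t)
      + s * (|d2 f (s, t)| ^ (p - 1) * d2 f (s, t)) = 0 := by
    intro s hs
    have h := hsol (s • e1) t ht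
    have hpt : Differentiable ℝ (pt u) :=
      ((hu.fderiv_right (m := 1) le_rfl).clm_apply contDiff_const).differentiable one_ne_zero
    rw [hrad.lap_smul_e1 hu hs ht] at h
    change prof (pt (pt u)) (s, t) - _ + |prof (pt u) (s, t)| ^ (p - 1) * prof (pt u) (s, t) = 0
      at h
    rw [← d2_prof hpt, ← d2_prof (hu.differentiable (by norm_num))] at h
    field_simp at h
    linear_combination h
  have hpar := hrad.hasRParity_prof
  have hf_t := hpar.d2 hf1
  have hf_tt := hf_t.d2 hd2f
  have hf_r := hpar.d1 hf1
  have hf_rr := hf_r.d1 hd1f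
  rcases lt_trichotomy r 0 with hr | rfl | hr
  · have h := hpos (-r) (neg_pos.mpr hr)
    rw [hf_t r t ht, hf_tt r t ht, hf_r r t ht, hf_rr r t ht, neg_neg] at h
    simp only [one_mul] at h
    linear_combination -h
  · simpa using hf_r.apply_zero_eq_zero ht
  · exact hpos r hr

end SolvesDampedWave

def rVel (u : E3 × ℝ → ℝ) : ℝ × ℝ → ℝ := fun w => w.1 * d2 (prof u) w

def damping (p : ℝ) (u : E3 × ℝ → ℝ) : ℝ × ℝ → ℝ := fun z => p * |d2 (prof u) z| ^ (p - 1) / 2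

section Riemann

variable {u : E3 × ℝ → ℝ}

theorem Xplus_eq (u : E3 × ℝ → ℝ) : Xplus u = fun z => d2 (rVel u) z + d1 (rVel u) z := rfl

theorem Xminus_eq (u : E3 × ℝ → ℝ) : Xminus u = fun z => d2 (rVel u) z - d1 (rVel u) z := rfl

theorem contDiff_rVel (hu : ContDiff ℝ 3 u) : ContDiff ℝ 2 (rVel u) :=
  contDiff_fst.mul ((contDiff_prof hu).d2 le_rfl)

theorem contDiff_Xplus (hu : ContDiff ℝ 3 u) : ContDiff ℝ 1 (Xplus u) :=
  ((contDiff_rVel hu).d2 le_rfl).add ((contDiff_rVel hu).d1 le_rfl)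

theorem contDiff_Xminus (hu : ContDiff ℝ 3 u) : ContDiff ℝ 1 (Xminus u) :=
  ((contDiff_rVel hu).d2 le_rfl).sub ((contDiff_rVel hu).d1 le_rfl)

theorem continuous_damping {p : ℝ} (hp : 1 ≤ p) (hu : ContDiff ℝ 2 u) :
    Continuous (damping p u) :=
  ((((contDiff_prof hu).d2 (m := 1) le_rfl).continuous.abs.rpow_const
    fun _ => Or.inr (by linarith)).const_mul p).div_const 2

theorem damping_nonneg {p : ℝ} (hp : 0 ≤ p) (z : ℝ × ℝ) : 0 ≤ damping p u z := by
  unfold damping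
  positivity

theorem d2_rVel (hu : ContDiff ℝ 3 u) :
    d2 (rVel u) = fun w => w.1 * d2 (d2 (prof u)) w :=
  funext fun _ => d2_fst_mul ((((contDiff_prof hu).d2 (m := 2) le_rfl).differentiable
    (by norm_num)) _)

theorem d1_rVel (hu : ContDiff ℝ 3 u) :
    d1 (rVel u) = fun w => d2 (prof u) w + w.1 * d1 (d2 (prof u)) w :=
  funext fun _ => d1_fst_mul ((((contDiff_prof hu).d2 (m := 2) le_rfl).differentiable
    (by norm_num)) _)

theorem SolvesDampedWave.d2_radial_eq {p : ℝ} (hp : 2 < p) (hsol : SolvesDampedWave p u)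
    (hrad : RadialIn u) (hu : ContDiff ℝ 3 u) (r : ℝ) {t : ℝ} (ht : 0 < t) :
    r * d2 (d2 (d2 (prof u))) (r, t) - r * d2 (d1 (d1 (prof u))) (r, t)
      - 2 * d2 (d1 (prof u)) (r, t)
      + r * (p * |d2 (prof u) (r, t)| ^ (p - 1) * d2 (d2 (prof u)) (r, t)) = 0 := by
  set f := prof u
  have hf : ContDiff ℝ 3 f := contDiff_prof hu
  have hd1f : ContDiff ℝ 2 (d1 f) := hf.d1 le_rfl
  have hd2f : ContDiff ℝ 2 (d2 f) := hf.d2 le_rfl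
  have hN := hasDerivAt_abs_rpow_mul_self (by linarith : 1 < p - 1) (d2 f (r, t))
  rw [sub_add_cancel] at hN
  have hNt := hN.comp t (hasDerivAt_d2 (a := r) ((hd2f.differentiable (by norm_num)) (r, t)))
  have hderiv := ((((hasDerivAt_d2 (((hd2f.d2 (m := 1) le_rfl).differentiable one_ne_zero)
    (r, t))).const_mul r).sub ((hasDerivAt_d2 (((hd1f.d1 (m := 1) le_rfl).differentiable
    one_ne_zero) (r, t))).const_mul r)).sub ((hasDerivAt_d2 ((hd1f.differentiable
    (by norm_num)) (r, t))).const_mul 2)).add (hNt.const_mul r)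
  have hzero : HasDerivAt
      (fun s => r * d2 (d2 f) (r, s) - r * d1 (d1 f) (r, s) - 2 * d1 f (r, s)
        + r * (|d2 f (r, s)| ^ (p - 1) * d2 f (r, s))) 0 t := by
    refine (hasDerivAt_const t (0 : ℝ)).congr_of_eventuallyEq ?_
    filter_upwards [lt_mem_nhds ht] with s hs
    exact hsol.radial_eq hrad (hu.of_le (by norm_num)) r hs.le
  exact hderiv.unique hzero

theorem SolvesDampedWave.rVel_wave {p : ℝ} (hp : 2 < p) (hsol : SolvesDampedWave p u)
    (hrad : RadialIn u) (hu : ContDiff ℝ 3 u) (r : ℝ) {t : ℝ} (ht : 0 < t) :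
    d2 (d2 (rVel u)) (r, t) - d1 (d1 (rVel u)) (r, t)
      = -(p * |d2 (prof u) (r, t)| ^ (p - 1)) * d2 (rVel u) (r, t) := by
  set f := prof u
  have hf : ContDiff ℝ 3 f := contDiff_prof hu
  have hd1f : ContDiff ℝ 2 (d1 f) := hf.d1 le_rfl
  have hd2f : ContDiff ℝ 2 (d2 f) := hf.d2 le_rfl
  have hd12f : ContDiff ℝ 1 (d1 (d2 f)) := hd2f.d1 le_rfl
  have hd22f : ContDiff ℝ 1 (d2 (d2 f)) := hd2f.d2 le_rfl
  have hschwarz₁ : d1 (d2 f) = d2 (d1 f) := funext (d1_d2_comm (hf.of_le (by norm_num)))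
  have hschwarz₂ : d1 (d2 (d1 f)) (r, t) = d2 (d1 (d1 f)) (r, t) := d1_d2_comm hd1f _
  have hV11 : d1 (d1 (rVel u)) (r, t) = 2 * d2 (d1 f) (r, t) + r * d2 (d1 (d1 f)) (r, t) := by
    rw [d1_rVel hu, d1_add ((hd2f.differentiable (by norm_num)) _)
      ((contDiff_fst.mul hd12f).differentiable one_ne_zero _),
      d1_fst_mul ((hd12f.differentiable one_ne_zero) _), hschwarz₁, hschwarz₂]
    ring
  rw [d2_rVel hu, d2_fst_mul ((hd22f.differentiable one_ne_zero) _), hV11]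
  linear_combination hsol.d2_radial_eq hp hrad hu r ht

theorem SolvesDampedWave.Xplus_transport {p : ℝ} (hp : 2 < p) (hsol : SolvesDampedWave p u)
    (hrad : RadialIn u) (hu : ContDiff ℝ 3 u) (r : ℝ) {t : ℝ} (ht : 0 < t) :
    d2 (Xplus u) (r, t) - d1 (Xplus u) (r, t)
      = -damping p u (r, t) * (Xplus u (r, t) + Xminus u (r, t)) := by
  rw [Xplus_eq, d2_sub_d1_of_d2_add_d1 (contDiff_rVel hu), hsol.rVel_wave hp hrad hu r ht,
    Xminus_eq, damping]
  ring

theorem SolvesDampedWave.Xminus_transport {p : ℝ} (hp : 2 < p) (hsol : SolvesDampedWave p u)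
    (hrad : RadialIn u) (hu : ContDiff ℝ 3 u) (r : ℝ) {t : ℝ} (ht : 0 < t) :
    d2 (Xminus u) (r, t) + d1 (Xminus u) (r, t)
      = -damping p u (r, t) * (Xplus u (r, t) + Xminus u (r, t)) := by
  rw [Xminus_eq, d2_add_d1_of_d2_sub_d1 (contDiff_rVel hu), hsol.rVel_wave hp hrad hu r ht,
    Xplus_eq, damping]
  ring

theorem RadialIn.Xplus_neg (hrad : RadialIn u) (hu : ContDiff ℝ 3 u) (r : ℝ) {t : ℝ}
    (ht : 0 ≤ t) : Xplus u (-r, t) = -Xminus u (r, t) := by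
  have hV : HasRParity (-1) (rVel u) :=
    (hrad.hasRParity_prof.d2 ((contDiff_prof hu).differentiable (by norm_num))).fst_mul
  have hVdiff : Differentiable ℝ (rVel u) := (contDiff_rVel hu).differentiable (by norm_num)
  simp only [Xplus_eq, Xminus_eq, hV.d2 hVdiff r t ht, hV.d1 hVdiff r t ht]
  ring

end Riemann

section CompactSupport

variable {u : E3 × ℝ → ℝ} {R T : ℝ}

theorem eqOn_zero_of_vanishing (hu : ContDiff ℝ 3 u) (hT : 0 < T)
    (hvan : ∀ (x : E3) (t : ℝ), R ≤ ‖x‖ → 0 ≤ t → t ≤ T → u (x, t) = 0) :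
    EqOn (d2 (prof u)) 0 ({r : ℝ | R < |r|} ×ˢ Icc 0 T) ∧
      EqOn (Xplus u) 0 ({r : ℝ | R < |r|} ×ˢ Icc 0 T) ∧
      EqOn (Xminus u) 0 ({r : ℝ | R < |r|} ×ˢ Icc 0 T) := by
  have hs := uniqueDiffOn_abs_gt_prod_Icc (R := R) hT
  have hf : EqOn (prof u) 0 ({r : ℝ | R < |r|} ×ˢ Icc 0 T) := fun z hz =>
    hvan _ _ (by rw [norm_smul_e1]; exact hz.1.le) hz.2.1 hz.2.2
  have hft := (eqOn_zero_d1_d2 hs ((contDiff_prof hu).differentiable (by norm_num)) hf).2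
  have hV : EqOn (rVel u) 0 ({r : ℝ | R < |r|} ×ˢ Icc 0 T) := fun z hz => by
    simp [rVel, hft hz]
  obtain ⟨hV1, hV2⟩ := eqOn_zero_d1_d2 hs ((contDiff_rVel hu).differentiable (by norm_num)) hV
  refine ⟨hft, fun z hz => ?_, fun z hz => ?_⟩
  · simp [Xplus_eq, hV1 hz, hV2 hz]
  · simp [Xminus_eq, hV1 hz, hV2 hz]

theorem SpatialCptSupp.exists_bound (hsupp : SpatialCptSupp u) (hu : ContDiff ℝ 3 u) {p : ℝ}
    (hp : 1 < p) (hT : 0 < T) :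
    ∃ B, ∀ r, ∀ t ∈ Icc 0 T,
      |damping p u (r, t)| ≤ B ∧ |Xplus u (r, t)| ≤ B ∧ |Xminus u (r, t)| ≤ B := by
  obtain ⟨R, -, hvan⟩ := hsupp T hT
  obtain ⟨hft, hXplus, hXminus⟩ := eqOn_zero_of_vanishing hu hT hvan
  obtain ⟨Bk, hBk⟩ := exists_abs_le_of_eqOn_zero (R := R) (continuous_damping hp.le
    (hu.of_le (by norm_num))) fun z hz => by
      simp [damping, hft hz, zero_rpow (by linarith : p - 1 ≠ 0)]
  obtain ⟨BP, hBP⟩ := exists_abs_le_of_eqOn_zero (contDiff_Xplus hu).continuous hXplus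
  obtain ⟨BM, hBM⟩ := exists_abs_le_of_eqOn_zero (contDiff_Xminus hu).continuous hXminus
  refine ⟨max Bk (max BP BM), fun r t ht => ⟨?_, ?_, ?_⟩⟩
  · exact (hBk r t ht).trans (le_max_left _ _)
  · exact (hBP r t ht).trans ((le_max_left _ _).trans (le_max_right _ _))
  · exact (hBM r t ht).trans ((le_max_right _ _).trans (le_max_right _ _))

end CompactSupport

section MaximumPrinciple

theorem le_of_hasDerivAt_le_mul_sub {g g' : ℝ → ℝ} {K Z s : ℝ} (hs : 0 ≤ s)
    (hcont : ContinuousOn g (Icc 0 s)) (hderiv : ∀ σ ∈ Ioo 0 s, HasDerivAt g (g' σ) σ)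
    (hle : ∀ σ ∈ Ioo 0 s, g' σ ≤ K * (Z - g σ)) :
    g s ≤ Z + (g 0 - Z) * exp (-(K * s)) := by
  have hexp (σ : ℝ) : HasDerivAt (fun σ => exp (K * σ)) (exp (K * σ) * K) σ := by
    simpa using ((hasDerivAt_id σ).const_mul K).exp
  have hanti : AntitoneOn (fun σ => (g σ - Z) * exp (K * σ)) (Icc 0 s) := by
    refine antitoneOn_of_hasDerivWithinAt_nonpos (convex_Icc 0 s)
      ((hcont.sub continuousOn_const).mul (by fun_prop)) (fun σ hσ => ?_) (fun σ hσ => ?_)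
      (f' := fun σ => g' σ * exp (K * σ) + (g σ - Z) * (exp (K * σ) * K))
    · rw [interior_Icc] at hσ
      exact (((hderiv σ hσ).sub_const Z).mul (hexp σ)).hasDerivWithinAt
    · rw [interior_Icc] at hσ
      nlinarith [hle σ hσ, exp_pos (K * σ)]
  have h := hanti (left_mem_Icc.mpr hs) (right_mem_Icc.mpr hs) hs
  simp only [mul_zero, exp_zero, mul_one] at h
  calc g s = Z + (g s - Z) * exp (K * s) * exp (-(K * s)) := by
        rw [mul_assoc, ← exp_add, add_neg_cancel, exp_zero]
        ring
    _ ≤ Z + (g 0 - Z) * exp (-(K * s)) := by gcongr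

theorem neg_mul_mul_add_le {k C y w Z : ℝ} (hk : 0 ≤ k) (hkC : k ≤ C) (hy : y ^ 2 ≤ Z)
    (hw : w ^ 2 ≤ Z) : -k * y * (y + w) ≤ C * (Z - y ^ 2) := by
  have hyw : -(y * w) ≤ Z := by nlinarith [sq_nonneg (y + w)]
  calc -k * y * (y + w) = k * (-(y * w) - y ^ 2) := by ring
    _ ≤ k * (Z - y ^ 2) := by gcongr
    _ ≤ C * (Z - y ^ 2) := by gcongr

/-- `σ ↦ (r - a (s - σ), σ)` is the characteristic of `∂ₜ + a ∂ᵣ` through `(r, s)`. -/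
theorem sq_le_of_transport {Y W k : ℝ × ℝ → ℝ} {a C Z T : ℝ} (hY : Differentiable ℝ Y)
    (htransport : ∀ r, ∀ t ∈ Ioo 0 T,
      d2 Y (r, t) + a * d1 Y (r, t) = -k (r, t) * (Y (r, t) + W (r, t)))
    (hk : ∀ r, ∀ t ∈ Icc 0 T, 0 ≤ k (r, t) ∧ k (r, t) ≤ C)
    (hZ : ∀ r, ∀ t ∈ Icc 0 T, Y (r, t) ^ 2 ≤ Z ∧ W (r, t) ^ 2 ≤ Z)
    (r : ℝ) {s : ℝ} (hs : s ∈ Icc 0 T) :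
    Y (r, s) ^ 2 ≤ Z + (Y (r - a * s, 0) ^ 2 - Z) * exp (-(2 * C * s)) := by
  set γ : ℝ → ℝ × ℝ := fun σ => (r - a * s + a * σ, σ)
  have hγ (σ : ℝ) : HasDerivAt γ (a, 1) σ := by
    simpa using (((hasDerivAt_id σ).const_mul a).const_add (r - a * s)).prodMk (hasDerivAt_id σ)
  have hdir (z : ℝ × ℝ) : fderiv ℝ Y z (a, 1) = d2 Y z + a * d1 Y z := by
    rw [d1_apply, d2_apply, ← smul_eq_mul, ← map_smul, ← map_add]
    simp
  have hYγ (σ : ℝ) : HasDerivAt (fun σ => Y (γ σ) ^ 2)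
      (2 * Y (γ σ) * (d2 Y (γ σ) + a * d1 Y (γ σ))) σ := by
    simpa [hdir] using ((hY (γ σ)).hasFDerivAt.comp_hasDerivAt σ (hγ σ)).fun_pow 2
  have h := le_of_hasDerivAt_le_mul_sub (g := fun σ => Y (γ σ) ^ 2) (K := 2 * C) (Z := Z) hs.1
    (((hY.continuous.comp (by fun_prop)).pow 2).continuousOn) (fun σ _ => hYγ σ)
    (fun σ hσ => by
      have hσT : σ ∈ Icc 0 T := ⟨hσ.1.le, hσ.2.le.trans hs.2⟩
      have hbound := neg_mul_mul_add_le (hk (γ σ).1 σ hσT).1 (hk (γ σ).1 σ hσT).2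
        (hZ (γ σ).1 σ hσT).1 (hZ (γ σ).1 σ hσT).2
      rw [htransport (γ σ).1 σ ⟨hσ.1, hσ.2.trans_le hs.2⟩]
      linarith)
  simpa [γ] using h

theorem sq_le_sub_of_dampedTransport {P M k : ℝ × ℝ → ℝ} {A C T Z : ℝ}
    (hP : Differentiable ℝ P) (hM : Differentiable ℝ M)
    (hPeq : ∀ r, ∀ t ∈ Ioo 0 T, d2 P (r, t) - d1 P (r, t) = -k (r, t) * (P (r, t) + M (r, t)))
    (hMeq : ∀ r, ∀ t ∈ Ioo 0 T, d2 M (r, t) + d1 M (r, t) = -k (r, t) * (P (r, t) + M (r, t)))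
    (hk : ∀ r, ∀ t ∈ Icc 0 T, 0 ≤ k (r, t) ∧ k (r, t) ≤ C)
    (hZ : ∀ r, ∀ t ∈ Icc 0 T, P (r, t) ^ 2 ≤ Z ∧ M (r, t) ^ 2 ≤ Z)
    (h0 : ∀ r, P (r, 0) ^ 2 ≤ A ∧ M (r, 0) ^ 2 ≤ A) (hAZ : A ≤ Z) (r : ℝ) {t : ℝ}
    (ht : t ∈ Icc 0 T) :
    P (r, t) ^ 2 ≤ Z - (Z - A) * exp (-(2 * C * T)) ∧
      M (r, t) ^ 2 ≤ Z - (Z - A) * exp (-(2 * C * T)) := by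
  have hC : 0 ≤ C := (hk r t ht).1.trans (hk r t ht).2
  have hexp : exp (-(2 * C * T)) ≤ exp (-(2 * C * t)) :=
    exp_le_exp.mpr (by nlinarith [ht.2])
  have hPt := sq_le_of_transport (a := -1) hP
    (fun r t ht => by rw [neg_one_mul, ← sub_eq_add_neg, hPeq r t ht]) hk hZ r ht
  have hMt := sq_le_of_transport (a := 1) hM
    (fun r t ht => by rw [one_mul, hMeq r t ht, add_comm (P _)]) hk
    (fun r t ht => (hZ r t ht).symm) r ht
  have hdecay {y₀ : ℝ} (hy₀ : y₀ ^ 2 ≤ A) :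
      Z + (y₀ ^ 2 - Z) * exp (-(2 * C * t)) ≤ Z - (Z - A) * exp (-(2 * C * T)) := by
    have h1 : (y₀ ^ 2 - Z) * exp (-(2 * C * t)) ≤ (A - Z) * exp (-(2 * C * t)) :=
      mul_le_mul_of_nonneg_right (by linarith) (exp_pos _).le
    have h2 : (A - Z) * exp (-(2 * C * t)) ≤ (A - Z) * exp (-(2 * C * T)) :=
      mul_le_mul_of_nonpos_left hexp (by linarith)
    linarith
  exact ⟨hPt.trans (hdecay (h0 _).1), hMt.trans (hdecay (h0 _).2)⟩

theorem abs_le_of_dampedTransport {P M k : ℝ × ℝ → ℝ} {A C T : ℝ} (hP : Differentiable ℝ P)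
    (hM : Differentiable ℝ M)
    (hPeq : ∀ r, ∀ t ∈ Ioo 0 T, d2 P (r, t) - d1 P (r, t) = -k (r, t) * (P (r, t) + M (r, t)))
    (hMeq : ∀ r, ∀ t ∈ Ioo 0 T, d2 M (r, t) + d1 M (r, t) = -k (r, t) * (P (r, t) + M (r, t)))
    (hk : ∀ r, ∀ t ∈ Icc 0 T, 0 ≤ k (r, t) ∧ k (r, t) ≤ C)
    (hbdd : ∃ B, ∀ r, ∀ t ∈ Icc 0 T, |P (r, t)| ≤ B ∧ |M (r, t)| ≤ B)
    (h0 : ∀ r, |P (r, 0)| ≤ A ∧ |M (r, 0)| ≤ A) (r : ℝ) {t : ℝ} (ht : t ∈ Icc 0 T) :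
    |P (r, t)| ≤ A ∧ |M (r, t)| ≤ A := by
  have hsq {a b : ℝ} (h : |a| ≤ b) : a ^ 2 ≤ b ^ 2 := sq_le_sq' (abs_le.mp h).1 (abs_le.mp h).2
  obtain ⟨B, hB⟩ := hbdd
  have hT : 0 ≤ T := ht.1.trans ht.2
  set S := {y | ∃ r, ∃ t ∈ Icc 0 T, y = max (P (r, t) ^ 2) (M (r, t) ^ 2)}
  have hSbdd : BddAbove S := ⟨B ^ 2, by
    rintro _ ⟨r, t, ht, rfl⟩
    exact max_le (hsq (hB r t ht).1) (hsq (hB r t ht).2)⟩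
  have hZ : ∀ r, ∀ t ∈ Icc 0 T, P (r, t) ^ 2 ≤ sSup S ∧ M (r, t) ^ 2 ≤ sSup S := fun r t ht =>
    max_le_iff.mp (le_csSup hSbdd ⟨r, t, ht, rfl⟩)
  have hZA : sSup S ≤ A ^ 2 := by
    by_contra! hAZ
    have hle := sq_le_sub_of_dampedTransport hP hM hPeq hMeq hk hZ
      (fun r => ⟨hsq (h0 r).1, hsq (h0 r).2⟩) hAZ.le
    have hSle : sSup S ≤ sSup S - (sSup S - A ^ 2) * exp (-(2 * C * T)) :=
      csSup_le ⟨_, 0, 0, ⟨le_rfl, hT⟩, rfl⟩ fun _ ⟨r, s, hs, hy⟩ =>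
        hy ▸ max_le (hle r hs).1 (hle r hs).2
    nlinarith [exp_pos (-(2 * C * T))]
  have hA : 0 ≤ A := (abs_nonneg _).trans (h0 0).1
  exact ⟨abs_le_of_sq_le_sq ((hZ r t ht).1.trans hZA) hA,
    abs_le_of_sq_le_sq ((hZ r t ht).2.trans hZA) hA⟩

end MaximumPrinciple

theorem abs_le_max_iSup_Ioi {P M : ℝ → ℝ} (hP : Continuous P) (hM : Continuous M)
    (hneg : ∀ r, P (-r) = -M r) (hPbdd : BddAbove (range fun r : Ioi (0 : ℝ) => |P r|))
    (hMbdd : BddAbove (range fun r : Ioi (0 : ℝ) => |M r|)) (r : ℝ) :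
    |P r| ≤ max (⨆ r : Ioi (0 : ℝ), |P r|) (⨆ r : Ioi (0 : ℝ), |M r|) ∧
      |M r| ≤ max (⨆ r : Ioi (0 : ℝ), |P r|) (⨆ r : Ioi (0 : ℝ), |M r|) := by
  set A := max (⨆ r : Ioi (0 : ℝ), |P r|) (⨆ r : Ioi (0 : ℝ), |M r|)
  have hclosed : IsClosed {r | |P r| ≤ A ∧ |M r| ≤ A} :=
    (isClosed_le hP.abs continuous_const).inter (isClosed_le hM.abs continuous_const)
  have hIoi : Ioi 0 ⊆ {r | |P r| ≤ A ∧ |M r| ≤ A} := fun r hr =>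
    ⟨(le_ciSup hPbdd ⟨r, hr⟩).trans (le_max_left _ _),
      (le_ciSup hMbdd ⟨r, hr⟩).trans (le_max_right _ _)⟩
  have hIci : Ici 0 ⊆ {r | |P r| ≤ A ∧ |M r| ≤ A} := by
    rw [← closure_Ioi]
    exact hclosed.closure_subset_iff.mpr hIoi
  rcases le_or_gt 0 r with hr | hr
  · exact hIci hr
  · obtain ⟨hP', hM'⟩ := hIci (neg_nonneg.mpr hr.le)
    have hPr : P r = -M (-r) := by rw [← hneg, neg_neg]
    have hMr : M r = -P (-r) := by rw [hneg, neg_neg]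
    rw [hPr, hMr, abs_neg, abs_neg]
    exact ⟨hM', hP'⟩

/-- the quantity `max(sup_r |X₊|, sup_r |X₋|)` does not exceed its
initial value. -/
theorem sup_X_monotone
    (p : ℝ) (hp : 3 ≤ p)
    (u : E3 × ℝ → ℝ) (hu : ContDiff ℝ 3 u)
    (heq : ∀ (x : E3) (t : ℝ), 0 ≤ t →
      pt (pt u) (x, t) - lap u (x, t) + |pt u (x, t)| ^ (p - 1) * pt u (x, t) = 0)
    (hrad : RadialIn u) (hsupp : SpatialCptSupp u) :
    ∀ t : ℝ, 0 ≤ t →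
      max (⨆ r : Ioi (0 : ℝ), |Xplus u ((r : ℝ), t)|)
          (⨆ r : Ioi (0 : ℝ), |Xminus u ((r : ℝ), t)|)
        ≤ max (⨆ r : Ioi (0 : ℝ), |Xplus u ((r : ℝ), 0)|)
            (⨆ r : Ioi (0 : ℝ), |Xminus u ((r : ℝ), 0)|) := by
  intro t ht
  have hsol : SolvesDampedWave p u := heq
  obtain ⟨B, hB⟩ := hsupp.exists_bound hu (by linarith : 1 < p) (by linarith : 0 < t + 1)
  have hB0 (r : ℝ) := hB r 0 ⟨le_rfl, by linarith⟩
  have hinit := abs_le_max_iSup_Ioi (P := fun r => Xplus u (r, 0))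
    (M := fun r => Xminus u (r, 0)) ((contDiff_Xplus hu).continuous.comp (by fun_prop))
    ((contDiff_Xminus hu).continuous.comp (by fun_prop)) (fun r => hrad.Xplus_neg hu r le_rfl)
    ⟨B, by rintro _ ⟨r, rfl⟩; exact (hB0 r).2.1⟩ ⟨B, by rintro _ ⟨r, rfl⟩; exact (hB0 r).2.2⟩
  have hbound (r : ℝ) := abs_le_of_dampedTransport
    ((contDiff_Xplus hu).differentiable one_ne_zero)
    ((contDiff_Xminus hu).differentiable one_ne_zero)
    (fun r s hs => hsol.Xplus_transport (by linarith) hrad hu r hs.1)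
    (fun r s hs => hsol.Xminus_transport (by linarith) hrad hu r hs.1)
    (fun r s hs => ⟨damping_nonneg (by linarith) _, (le_abs_self _).trans (hB r s hs).1⟩)
    ⟨B, fun r s hs => (hB r s hs).2⟩ hinit r ⟨ht, by linarith⟩
  exact max_le (ciSup_le fun r => (hbound r).1) (ciSup_le fun r => (hbound r).2)
end
end
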